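/- arXiv:2505.21331 — 3 statements merged into one kernel-verified Lean document; each statement's English description precedes it below -/
import Mathlib

section
/- Let γ* be a minimizer of γ ↦ μ·γ − λ·V(γ, r) over γ ≥ 0, and let o be any priority ordering of the states that lists every state i with c(i) + V^f(γ*, i) > γ* before every state i with c(i) + V^f(γ*, i) = γ*, and lists all states of these two classes before every state i with c(i) + V^f(γ*, i) < γ*. Then the fluid equilibrium of o attains the optimal fluid cost: Σ_{i∈S} c(i)·(q^o_i − ν^o_i) = C*. In particular, the equilibrium of the OaRC priority ordering (which ranks states in decreasing order of c(i) + V^f(γ*, i)) is an optimal solution of OriginalFluid. -/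
open scoped Classical
open Finset

/-- A finite tree-structured Markov chain: a finite state space partitioned into
levels `0, …, L-1`, a root `r` at level `0`, a parent map `pa` (with `pa r = r` by
convention), and transition probabilities `p i ∈ (0,1]` of being reached from the
parent, with `p r = 1`. -/
structure TreeMC (S : Type*) [Fintype S] [DecidableEq S] where
  /-- the number of levels -/
  L : ℕ
  /-- the root -/
  r : S
  /-- the parent map (with `pa r = r` by convention) -/
  pa : S → S
  /-- the level of each state -/
  level : S → ℕ
  /-- the probability of being reached from the parent -/
  p : S → ℝ
  level_lt : ∀ i, level i < L
  level_r : level r = 0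
  root_unique : ∀ i, level i = 0 → i = r
  pa_r : pa r = r
  level_pa : ∀ i, i ≠ r → level (pa i) + 1 = level i
  p_pos : ∀ i, 0 < p i
  p_le_one : ∀ i, p i ≤ 1
  p_r : p r = 1

namespace TreeMC

variable {S : Type*} [Fintype S] [DecidableEq S] (M : TreeMC S)

/-- The ancestors of `i`: states on the path from the root to `i` (both included). -/
noncomputable def anc (i : S) : Finset S :=
  Finset.univ.filter fun a => ∃ n : ℕ, M.pa^[n] i = a

/-- The subtree of `i`: all states having `i` as an ancestor. -/
noncomputable def subt (i : S) : Finset S :=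
  Finset.univ.filter fun k => i ∈ M.anc k

/-- The subtree of a set of states. -/
noncomputable def subF (X : Finset S) : Finset S :=
  Finset.univ.filter fun k => ∃ i ∈ X, k ∈ M.subt i

/-- `π i`: the probability that a job passes through state `i`. -/
noncomputable def pi (i : S) : ℝ :=
  ∏ a ∈ M.anc i, M.p a

/-- The children of `i`. -/
noncomputable def child (i : S) : Finset S :=
  Finset.univ.filter fun k => k ≠ M.r ∧ M.pa k = i

/-- `T` is the top set of `X`: a subset of `X` whose subtree covers `X` and in which
no state lies in the subtree of a different state. -/
def IsTopSet (X T : Finset S) : Prop :=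
  T ⊆ X ∧ X ⊆ M.subF T ∧ ∀ i ∈ T, ∀ k ∈ T, i ≠ k → k ∉ M.subt i

/-- Expected future cost conditional on being in state `a`. -/
noncomputable def cf (c : S → ℝ) (a : S) : ℝ :=
  ∑ i ∈ M.subt a, c i * M.pi i / M.pi a

/-- `V` is the ski-rental value function:
`V γ i = min (γ, c i + Σ_{k ∈ child i} p k · V γ k)`. -/
def IsSkiValue (c : S → ℝ) (V : ℝ → S → ℝ) : Prop :=
  ∀ γ : ℝ, ∀ i : S, V γ i = min γ (c i + ∑ k ∈ M.child i, M.p k * V γ k)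

/-- Expected future cost-to-go `V^f`. -/
noncomputable def Vf (V : ℝ → S → ℝ) (γ : ℝ) (i : S) : ℝ :=
  ∑ k ∈ M.child i, M.p k * V γ k

/-- The candidate optimal state duals `β*(γ)`. -/
noncomputable def betaStar (c : S → ℝ) (V : ℝ → S → ℝ) (γ : ℝ) (i : S) : ℝ :=
  max 0 (c i + M.Vf V γ i - γ)

/-- Feasibility for the dual program `D*(γ)`. -/
def DualFeasible (c : S → ℝ) (γ : ℝ) (β : S → ℝ) : Prop :=
  (∀ i, 0 ≤ β i) ∧ ∀ a, M.cf c a ≤ γ + ∑ i ∈ M.subt a, β i * M.pi i / M.pi a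

/-- Feasibility for the fluid LP (OriginalFluid). -/
def OrigFeasible (lam mu : ℝ) (q ν : S → ℝ) : Prop :=
  (∀ i, 0 ≤ q i) ∧ (∀ i, 0 ≤ ν i) ∧ q M.r = lam ∧
    (∀ i, i ≠ M.r → q i = (q (M.pa i) - ν (M.pa i)) * M.p i) ∧
    (∀ i, ν i ≤ q i) ∧ ∑ i : S, ν i ≤ mu

/-- Feasibility for the fluid LP (SimplerFluid). -/
def SimpFeasible (lam mu : ℝ) (ν : S → ℝ) : Prop :=
  (∀ i, 0 ≤ ν i) ∧ (∀ i, ∑ a ∈ M.anc i, ν a * M.pi i / M.pi a ≤ lam * M.pi i) ∧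
    ∑ i : S, ν i ≤ mu

end TreeMC

/-!
The fluid LP is dual to maximising `λ·V(γ, r) - μ·γ` over `γ ≥ 0`. Summation by parts along the
tree turns the cost of any flow-feasible `(q, ν)` into
`λ·V(γ, r) - Σ V(γ, i)·ν i + Σ β*(γ, i)·(q i - ν i)`, which gives weak duality, with equality
under complementary slackness: `ν` lives on states of index `c i + V^f(γ, i) ≥ γ`, states of
index `> γ` are fully blocked, and `γ·(μ - Σ ν) = 0`.

For the equilibrium of an ordering compatible with `γ*`, these conditions come from the
minimality of `γ*`: the right and left derivatives of `γ ↦ V(γ, r)` at `γ*` are bounded below and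
above by the `π`-masses of the top sets of `{index > γ*}` and `{index ≥ γ*}`. A state of index
`> γ*` that is not blocked would make the prefix `{index > γ*}` fit into the capacity, against the
maximality of `m`; a served state of index `< γ*` would leave the served top mass below `μ/λ`.
-/

open Filter Topology

section Ordering

variable {S : Type*} [DecidableEq S] {n : ℕ}

/-- `o_[k]`. -/
def orderPrefix (e : Fin n ≃ S) (k : ℕ) : Finset S :=
  (Finset.univ.filter fun j : Fin n => (j : ℕ) < k).image e

variable {e : Fin n ≃ S}

lemma mem_orderPrefix {k : ℕ} {x : S} : x ∈ orderPrefix e k ↔ (e.symm x : ℕ) < k := by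
  simp [orderPrefix, ← Equiv.eq_symm_apply]

lemma orderPrefix_succ {k : ℕ} (hk : k < n) :
    orderPrefix e (k + 1) = insert (e ⟨k, hk⟩) (orderPrefix e k) := by
  ext x
  simp only [Finset.mem_insert, mem_orderPrefix, ← e.symm_apply_eq, Fin.ext_iff]
  omega

lemma orderPrefix_card_eq {X : Finset S} (hord : ∀ x ∈ X, ∀ y ∉ X, e.symm x < e.symm y) :
    orderPrefix e X.card = X := by
  ext x
  rw [mem_orderPrefix]
  constructor
  · intro hx
    by_contra hX
    have hsub : X.map e.symm.toEmbedding ⊆ Finset.Iio (e.symm x) := by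
      intro j hj
      obtain ⟨y, hy, rfl⟩ := Finset.mem_map.1 hj
      exact Finset.mem_Iio.2 (hord y hy x hX)
    have := Finset.card_le_card hsub
    rw [Finset.card_map, Fin.card_Iio] at this
    omega
  · intro hx
    have hsub : (Finset.Iio (e.symm x)).map e.toEmbedding ⊆ X.erase x := by
      intro y hy
      obtain ⟨j, hj, rfl⟩ := Finset.mem_map.1 hy
      have hj : j < e.symm x := Finset.mem_Iio.1 hj
      refine Finset.mem_erase.2 ⟨fun h => by simp [← h] at hj, ?_⟩
      by_contra hjX
      exact (hord x hx _ hjX).not_gt (by simpa using hj)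
    have := Finset.card_le_card hsub
    rw [Finset.card_map, Fin.card_Iio, Finset.card_erase_of_mem hx] at this
    have := Finset.card_pos.2 ⟨x, hx⟩
    omega

end Ordering

lemma partial_state_spec {S : Type*} {n m : ℕ} {e : Fin n ≃ S} {pOpt : Option S} {serve mu : ℝ}
    (hm : m ≤ n)
    (hpsome : ∀ h : m < n, serve < mu → pOpt = some (e ⟨m, h⟩))
    (hpnone : m = n ∨ serve = mu → pOpt = none) (hserve : serve ≤ mu) {pp : S}
    (hp : pOpt = some pp) : ∃ h : m < n, pp = e ⟨m, h⟩ ∧ serve < mu := by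
  have hmn : m < n := lt_of_le_of_ne hm fun h => by simp [hpnone (Or.inl h)] at hp
  have hlt : serve < mu := lt_of_le_of_ne hserve fun h => by simp [hpnone (Or.inr h)] at hp
  exact ⟨hmn, Option.some_injective _ (hp.symm.trans (hpsome hmn hlt)), hlt⟩

lemma exists_pos_forall_le_of_pos {ι : Type*} [Finite ι] (f : ι → ℝ) :
    ∃ δ, 0 < δ ∧ ∀ i, 0 < f i → δ ≤ f i := by
  have h : ∀ i, ∀ᶠ δ in 𝓝[>] (0 : ℝ), 0 < f i → δ ≤ f i := fun i => by
    by_cases hi : 0 < f i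
    · filter_upwards [nhdsWithin_le_nhds (eventually_le_nhds hi)] with δ hδ _ using hδ
    · exact Eventually.of_forall fun _ h => absurd h hi
  exact ((eventually_all.2 h).and self_mem_nhdsWithin).exists.imp fun δ h => ⟨h.2, h.1⟩

lemma partial_rate_bounds {lam mu s κ w nuP : ℝ} (hlam : 0 < lam) (hw : 0 < w)
    (hs : lam * s < mu) (hmax : mu < lam * (s + κ * w)) (hnuP : nuP = (mu - lam * s) / κ) :
    0 ≤ nuP ∧ nuP ≤ lam * w ∧ lam * s + nuP * κ = mu := by
  have hκ : 0 < κ := by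
    by_contra! h
    nlinarith [mul_pos hlam hw]
  subst hnuP
  refine ⟨div_nonneg (by linarith) hκ.le, (div_le_iff₀ hκ).2 (by nlinarith), ?_⟩
  field_simp
  ring

namespace TreeMC

variable {S : Type*} [Fintype S] [DecidableEq S] (M : TreeMC S)

lemma mem_anc {a i : S} : a ∈ M.anc i ↔ ∃ n : ℕ, M.pa^[n] i = a := by
  simp [anc]

lemma self_mem_anc (i : S) : i ∈ M.anc i := M.mem_anc.2 ⟨0, rfl⟩

lemma pa_mem_anc (i : S) : M.pa i ∈ M.anc i := M.mem_anc.2 ⟨1, rfl⟩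

lemma mem_anc_trans {a b i : S} (h₁ : a ∈ M.anc i) (h₂ : b ∈ M.anc a) : b ∈ M.anc i := by
  obtain ⟨n, rfl⟩ := M.mem_anc.1 h₁
  obtain ⟨k, rfl⟩ := M.mem_anc.1 h₂
  exact M.mem_anc.2 ⟨k + n, Function.iterate_add_apply _ k n i⟩

lemma mem_anc_total {a b i : S} (ha : a ∈ M.anc i) (hb : b ∈ M.anc i) :
    a ∈ M.anc b ∨ b ∈ M.anc a := by
  obtain ⟨n, rfl⟩ := M.mem_anc.1 ha
  obtain ⟨k, rfl⟩ := M.mem_anc.1 hb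
  rcases le_total n k with h | h
  · exact Or.inr (M.mem_anc.2 ⟨k - n, by rw [← Function.iterate_add_apply, Nat.sub_add_cancel h]⟩)
  · exact Or.inl (M.mem_anc.2 ⟨n - k, by rw [← Function.iterate_add_apply, Nat.sub_add_cancel h]⟩)

lemma anc_root : M.anc M.r = {M.r} := by
  ext a
  have : ∀ n, M.pa^[n] M.r = M.r := fun n => Function.iterate_fixed M.pa_r n
  simp [mem_anc, this, eq_comm]

lemma anc_of_ne_root {i : S} (hi : i ≠ M.r) : M.anc i = insert i (M.anc (M.pa i)) := by
  ext a
  simp only [mem_anc, Finset.mem_insert]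
  constructor
  · rintro ⟨_ | n, rfl⟩
    · exact Or.inl rfl
    · exact Or.inr ⟨n, (Function.iterate_succ_apply _ n i).symm⟩
  · rintro (rfl | ⟨n, rfl⟩)
    · exact ⟨0, rfl⟩
    · exact ⟨n + 1, Function.iterate_succ_apply _ n i⟩

lemma level_pa_le (i : S) : M.level (M.pa i) ≤ M.level i := by
  by_cases hi : i = M.r
  · rw [hi, M.pa_r]
  · have := M.level_pa i hi
    omega

lemma level_le_of_mem_anc {a i : S} (h : a ∈ M.anc i) : M.level a ≤ M.level i := by
  obtain ⟨n, rfl⟩ := M.mem_anc.1 h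
  induction n with
  | zero => rfl
  | succ n ih =>
    rw [Function.iterate_succ_apply']
    exact (M.level_pa_le _).trans (ih (M.mem_anc.2 ⟨n, rfl⟩))

lemma level_lt_of_mem_anc {a i : S} (h : a ∈ M.anc i) (hne : a ≠ i) :
    M.level a < M.level i := by
  have hi : i ≠ M.r := by
    rintro rfl
    rw [M.anc_root, Finset.mem_singleton] at h
    exact hne h
  rw [M.anc_of_ne_root hi, Finset.mem_insert] at h
  have := M.level_le_of_mem_anc (h.resolve_left hne)
  have := M.level_pa i hi
  omega

lemma eq_of_mem_anc_of_mem_anc {a i : S} (h₁ : a ∈ M.anc i) (h₂ : i ∈ M.anc a) : a = i := by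
  by_contra hne
  have := M.level_lt_of_mem_anc h₁ hne
  have := M.level_lt_of_mem_anc h₂ (Ne.symm hne)
  omega

theorem induction_pa {Q : S → Prop} (root : Q M.r) (step : ∀ i, i ≠ M.r → Q (M.pa i) → Q i)
    (i : S) : Q i := by
  induction h : M.level i generalizing i with
  | zero => rw [M.root_unique i h]; exact root
  | succ n ih =>
    have hi : i ≠ M.r := by
      rintro rfl
      rw [M.level_r] at h
      omega
    exact step i hi (ih _ (by have := M.level_pa i hi; omega))

lemma root_mem_anc (i : S) : M.r ∈ M.anc i := by
  induction i using M.induction_pa with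
  | root => exact M.self_mem_anc _
  | step i _ ih => exact M.mem_anc_trans (M.pa_mem_anc i) ih

lemma mem_subt {k a : S} : k ∈ M.subt a ↔ a ∈ M.anc k := by
  simp [subt]

lemma self_mem_subt (a : S) : a ∈ M.subt a := M.mem_subt.2 (M.self_mem_anc a)

lemma mem_subt_root (k : S) : k ∈ M.subt M.r := M.mem_subt.2 (M.root_mem_anc k)

lemma root_mem_subt {a : S} : M.r ∈ M.subt a ↔ a = M.r := by
  rw [mem_subt, anc_root, Finset.mem_singleton]

lemma subt_subset_subt {a b : S} (h : a ∈ M.subt b) : M.subt a ⊆ M.subt b :=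
  fun _ hk => M.mem_subt.2 (M.mem_anc_trans (M.mem_subt.1 hk) (M.mem_subt.1 h))

lemma mem_subt_of_ne_root {k a : S} (hk : k ≠ M.r) :
    k ∈ M.subt a ↔ k = a ∨ M.pa k ∈ M.subt a := by
  rw [mem_subt, mem_subt, M.anc_of_ne_root hk, Finset.mem_insert, eq_comm]

lemma pa_notMem_subt {i : S} (hi : i ≠ M.r) : M.pa i ∉ M.subt i := fun h => by
  have := M.level_le_of_mem_anc (M.mem_subt.1 h)
  have := M.level_pa i hi
  omega

lemma mem_child {k i : S} : k ∈ M.child i ↔ k ≠ M.r ∧ M.pa k = i := by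
  simp [child]

lemma level_of_mem_child {k i : S} (h : k ∈ M.child i) : M.level k = M.level i + 1 := by
  obtain ⟨hk, rfl⟩ := M.mem_child.1 h
  exact (M.level_pa k hk).symm

lemma subt_subset_of_mem_child {k i : S} (h : k ∈ M.child i) : M.subt k ⊆ M.subt i := by
  obtain ⟨hk, rfl⟩ := M.mem_child.1 h
  exact M.subt_subset_subt ((M.mem_subt_of_ne_root hk).2 (Or.inr (M.self_mem_subt _)))

theorem induction_child {Q : S → Prop} (step : ∀ i, (∀ k ∈ M.child i, Q k) → Q i) (i : S) :
    Q i := by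
  induction h : M.L - M.level i generalizing i with
  | zero => have := M.level_lt i; omega
  | succ n ih =>
    exact step i fun k hk => ih k (by have := M.level_of_mem_child hk; have := M.level_lt k; omega)

lemma exists_child_of_mem_subt {a k : S} (h : k ∈ M.subt a) (hne : k ≠ a) :
    ∃ c ∈ M.child a, k ∈ M.subt c := by
  induction k using M.induction_pa with
  | root => exact absurd (M.root_mem_subt.1 h).symm hne
  | step k hk ih =>
    rcases (M.mem_subt_of_ne_root hk).1 h with rfl | hpa
    · exact absurd rfl hne
    by_cases hka : M.pa k = a
    · exact ⟨k, M.mem_child.2 ⟨hk, hka⟩, M.self_mem_subt k⟩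
    · obtain ⟨c, hc, hkc⟩ := ih hpa hka
      exact ⟨c, hc, (M.mem_subt_of_ne_root hk).2 (Or.inr hkc)⟩

lemma disjoint_subt_of_mem_child {i c c' : S} (hc : c ∈ M.child i) (hc' : c' ∈ M.child i)
    (hne : c ≠ c') : Disjoint (M.subt c) (M.subt c') := by
  refine Finset.disjoint_left.2 fun k hk hk' => ?_
  have hl := M.level_of_mem_child hc
  have hl' := M.level_of_mem_child hc'
  rcases M.mem_anc_total (M.mem_subt.1 hk) (M.mem_subt.1 hk') with h | h
  · have := M.level_lt_of_mem_anc h hne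
    omega
  · have := M.level_lt_of_mem_anc h hne.symm
    omega

lemma pi_pos (i : S) : 0 < M.pi i :=
  Finset.prod_pos fun a _ => M.p_pos a

lemma pi_root : M.pi M.r = 1 := by
  rw [pi, M.anc_root, Finset.prod_singleton, M.p_r]

lemma pi_of_ne_root {k : S} (hk : k ≠ M.r) : M.pi k = M.p k * M.pi (M.pa k) := by
  have hnot : k ∉ M.anc (M.pa k) := fun h => M.pa_notMem_subt hk (M.mem_subt.2 h)
  rw [pi, pi, M.anc_of_ne_root hk, Finset.prod_insert hnot]

lemma pi_of_mem_child {k a : S} (h : k ∈ M.child a) : M.pi k = M.p k * M.pi a := by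
  obtain ⟨hk, rfl⟩ := M.mem_child.1 h
  exact M.pi_of_ne_root hk

lemma mem_subF {X : Finset S} {k : S} : k ∈ M.subF X ↔ ∃ i ∈ X, k ∈ M.subt i := by
  simp [subF]

lemma mem_subF_of_mem {X : Finset S} {i : S} (h : i ∈ X) : i ∈ M.subF X :=
  M.mem_subF.2 ⟨i, h, M.self_mem_subt i⟩

lemma mem_subF_of_mem_subt {X : Finset S} {i k : S} (hi : i ∈ M.subF X) (hk : k ∈ M.subt i) :
    k ∈ M.subF X := by
  obtain ⟨t, ht, hit⟩ := M.mem_subF.1 hi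
  exact M.mem_subF.2 ⟨t, ht, M.subt_subset_subt hit hk⟩

section ValueFunction

variable {M} {c : S → ℝ} {V : ℝ → S → ℝ}

lemma V_eq_min (hV : M.IsSkiValue c V) (γ : ℝ) (i : S) :
    V γ i = min γ (c i + M.Vf V γ i) :=
  hV γ i

lemma V_le (hV : M.IsSkiValue c V) (γ : ℝ) (i : S) : V γ i ≤ γ := by
  rw [V_eq_min hV]
  exact min_le_left _ _

lemma V_eq_of_le {γ : ℝ} {i : S} (hV : M.IsSkiValue c V) (h : γ ≤ c i + M.Vf V γ i) :
    V γ i = γ := by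
  rw [V_eq_min hV, min_eq_left h]

lemma V_eq_of_ge {γ : ℝ} {i : S} (hV : M.IsSkiValue c V) (h : c i + M.Vf V γ i ≤ γ) :
    V γ i = c i + M.Vf V γ i := by
  rw [V_eq_min hV, min_eq_right h]

lemma V_mono (hV : M.IsSkiValue c V) {γ γ' : ℝ} (h : γ ≤ γ') (i : S) : V γ i ≤ V γ' i := by
  induction i using M.induction_child with
  | step i ih =>
    rw [V_eq_min hV, V_eq_min hV γ']
    exact min_le_min h (add_le_add le_rfl (Finset.sum_le_sum fun k hk =>
      mul_le_mul_of_nonneg_left (ih k hk) (M.p_pos k).le))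

lemma Vf_mono (hV : M.IsSkiValue c V) {γ γ' : ℝ} (h : γ ≤ γ') (i : S) :
    M.Vf V γ i ≤ M.Vf V γ' i :=
  Finset.sum_le_sum fun k _ => mul_le_mul_of_nonneg_left (V_mono hV h k) (M.p_pos k).le

lemma V_zero (hV : M.IsSkiValue c V) (hc : ∀ i, 0 < c i) (i : S) : V 0 i = 0 := by
  induction i using M.induction_child with
  | step i ih =>
    have hVf : M.Vf V 0 i = 0 := Finset.sum_eq_zero fun k hk => by rw [ih k hk, mul_zero]
    rw [V_eq_min hV, hVf, add_zero, min_eq_left (hc i).le]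

lemma Vf_nonneg (hV : M.IsSkiValue c V) (hc : ∀ i, 0 < c i) {γ : ℝ} (hγ : 0 ≤ γ) (i : S) :
    0 ≤ M.Vf V γ i :=
  Finset.sum_nonneg fun k _ =>
    mul_nonneg (M.p_pos k).le (V_zero hV hc k ▸ V_mono hV hγ k)

lemma V_add_betaStar (hV : M.IsSkiValue c V) (γ : ℝ) (i : S) :
    V γ i + M.betaStar c V γ i = c i + M.Vf V γ i := by
  rw [V_eq_min hV, betaStar]
  rcases le_total γ (c i + M.Vf V γ i) with h | h
  · rw [min_eq_left h, max_eq_right (by linarith)]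
    ring
  · rw [min_eq_right h, max_eq_left (by linarith)]
    ring

end ValueFunction

lemma Vf_mul_pi (V : ℝ → S → ℝ) (γ : ℝ) (a : S) :
    M.Vf V γ a * M.pi a = ∑ k ∈ M.child a, V γ k * M.pi k := by
  rw [Vf, Finset.sum_mul]
  exact Finset.sum_congr rfl fun k hk => by rw [M.pi_of_mem_child hk]; ring

lemma sub_Vf_mul_pi (V : ℝ → S → ℝ) (γ γ' : ℝ) (a : S) :
    (M.Vf V γ a - M.Vf V γ' a) * M.pi a = ∑ k ∈ M.child a, (V γ k - V γ' k) * M.pi k := by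
  simp only [sub_mul, Finset.sum_sub_distrib, Vf_mul_pi]

section Duality

variable {lam mu : ℝ} {q ν : S → ℝ}

lemma sum_sub_sum_child_mul (hqr : q M.r = lam)
    (hflow : ∀ i, i ≠ M.r → q i = (q (M.pa i) - ν (M.pa i)) * M.p i) (U : S → ℝ) :
    ∑ i, (U i - ∑ k ∈ M.child i, M.p k * U k) * (q i - ν i) =
      lam * U M.r - ∑ i, U i * ν i := by
  have hchild : ∑ i, (∑ k ∈ M.child i, M.p k * U k) * (q i - ν i) =
      ∑ k ∈ Finset.univ.erase M.r, U k * q k := by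
    rw [← Finset.sum_fiberwise (Finset.univ.erase M.r) M.pa]
    refine Finset.sum_congr rfl fun i _ => ?_
    rw [Finset.sum_mul]
    refine Finset.sum_congr (by ext k; simp [mem_child]) fun k hk => ?_
    obtain ⟨hkr, rfl⟩ : k ≠ M.r ∧ M.pa k = i := by simpa using hk
    rw [hflow k hkr]
    ring
  have hroot := Finset.add_sum_erase Finset.univ (fun k => U k * q k) (Finset.mem_univ M.r)
  have hsplit : ∀ i, (U i - ∑ k ∈ M.child i, M.p k * U k) * (q i - ν i) =
      U i * q i - U i * ν i - (∑ k ∈ M.child i, M.p k * U k) * (q i - ν i) := fun i => by ring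
  rw [Finset.sum_congr rfl fun i _ => hsplit i, Finset.sum_sub_distrib, Finset.sum_sub_distrib,
    hchild, ← hroot, hqr]
  ring

variable {c : S → ℝ} {V : ℝ → S → ℝ}

lemma sum_cost_eq (hV : M.IsSkiValue c V) (hqr : q M.r = lam)
    (hflow : ∀ i, i ≠ M.r → q i = (q (M.pa i) - ν (M.pa i)) * M.p i) (γ : ℝ) :
    ∑ i, c i * (q i - ν i) =
      lam * V γ M.r - ∑ i, V γ i * ν i + ∑ i, M.betaStar c V γ i * (q i - ν i) := by
  rw [← M.sum_sub_sum_child_mul hqr hflow (V γ), ← Finset.sum_add_distrib]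
  refine Finset.sum_congr rfl fun i _ => ?_
  have h := V_add_betaStar hV γ i
  simp only [Vf] at h
  linear_combination (ν i - q i) * h

theorem dual_le_cost (hV : M.IsSkiValue c V) (hF : M.OrigFeasible lam mu q ν) {γ : ℝ}
    (hγ : 0 ≤ γ) : lam * V γ M.r - mu * γ ≤ ∑ i, c i * (q i - ν i) := by
  obtain ⟨-, hν, hqr, hflow, hνq, hsum⟩ := hF
  have hserved : ∑ i, V γ i * ν i ≤ mu * γ :=
    calc ∑ i, V γ i * ν i ≤ ∑ i, γ * ν i :=
          Finset.sum_le_sum fun i _ => mul_le_mul_of_nonneg_right (V_le hV γ i) (hν i)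
      _ = γ * ∑ i, ν i := Finset.mul_sum _ _ _ |>.symm
      _ ≤ mu * γ := by rw [mul_comm mu]; exact mul_le_mul_of_nonneg_left hsum hγ
  have hβ : 0 ≤ ∑ i, M.betaStar c V γ i * (q i - ν i) :=
    Finset.sum_nonneg fun i _ => mul_nonneg (le_max_left _ _) (sub_nonneg.2 (hνq i))
  rw [M.sum_cost_eq hV hqr hflow γ]
  linarith

theorem cost_eq_of_slackness (hV : M.IsSkiValue c V) (hF : M.OrigFeasible lam mu q ν) {γ : ℝ}
    (hsupp : ∀ a, ν a ≠ 0 → γ ≤ c a + M.Vf V γ a)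
    (htight : ∀ i, γ < c i + M.Vf V γ i → ν i = q i) (hslack : γ * ∑ i, ν i = γ * mu) :
    ∑ i, c i * (q i - ν i) = lam * V γ M.r - mu * γ := by
  obtain ⟨-, -, hqr, hflow, -, -⟩ := hF
  have hserved : ∑ i, V γ i * ν i = mu * γ := by
    rw [mul_comm mu, ← hslack, Finset.mul_sum]
    refine Finset.sum_congr rfl fun i _ => ?_
    by_cases h : ν i = 0
    · simp [h]
    · rw [V_eq_of_le hV (hsupp i h)]
  have hβ : ∑ i, M.betaStar c V γ i * (q i - ν i) = 0 := Finset.sum_eq_zero fun i _ => by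
    by_cases h : γ < c i + M.Vf V γ i
    · rw [htight i h, sub_self, mul_zero]
    · rw [betaStar, max_eq_left (by linarith), zero_mul]
  rw [M.sum_cost_eq hV hqr hflow γ, hserved, hβ, add_zero]

end Duality

section TopSet

variable {M} {X T : Finset S}

lemma IsTopSet.root_mem (hT : M.IsTopSet X T) (h : M.r ∈ M.subF X) : M.r ∈ T := by
  obtain ⟨t, ht, hrt⟩ := M.mem_subF.1 h
  rw [M.root_mem_subt] at hrt
  subst hrt
  obtain ⟨y, hy, hry⟩ := M.mem_subF.1 (hT.2.1 ht)
  rwa [M.root_mem_subt.1 hry] at hy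

lemma IsTopSet.notMem_of_pa_mem (hT : M.IsTopSet X T) {i : S} (hi : i ≠ M.r)
    (hpa : M.pa i ∈ M.subF X) : i ∉ T := by
  intro hiT
  obtain ⟨t, ht, hpat⟩ := M.mem_subF.1 hpa
  obtain ⟨y, hy, hty⟩ := M.mem_subF.1 (hT.2.1 ht)
  have hpay : M.pa i ∈ M.subt y := M.subt_subset_subt hty hpat
  refine hT.2.2 y hy i hiT ?_ ((M.mem_subt_of_ne_root hi).2 (Or.inr hpay))
  rintro rfl
  exact M.pa_notMem_subt hi hpay

lemma IsTopSet.mem_of_pa_notMem (hT : M.IsTopSet X T) {i : S} (hi : i ≠ M.r)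
    (h : i ∈ M.subF X) (hpa : M.pa i ∉ M.subF X) : i ∈ T := by
  have hstop : ∀ t ∈ X, i ∈ M.subt t → t = i := fun t ht hit => by
    by_contra hne
    exact hpa (M.mem_subF.2 ⟨t, ht,
      ((M.mem_subt_of_ne_root hi).1 hit).resolve_left fun h => hne h.symm⟩)
  obtain ⟨t, ht, hit⟩ := M.mem_subF.1 h
  obtain rfl := hstop t ht hit
  obtain ⟨y, hy, hty⟩ := M.mem_subF.1 (hT.2.1 ht)
  rwa [hstop y (hT.1 hy) hty] at hy

lemma IsTopSet.insert (hT : M.IsTopSet X T) {p : S} (hp : p ∉ M.subF X) :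
    M.IsTopSet (insert p X) (insert p (T.filter fun t => t ∉ M.subt p)) := by
  obtain ⟨hTX, hXT, hanti⟩ := hT
  refine ⟨Finset.insert_subset_insert _ ((Finset.filter_subset _ _).trans hTX),
    fun x hx => ?_, ?_⟩
  · rcases Finset.mem_insert.1 hx with rfl | hx
    · exact M.mem_subF_of_mem (Finset.mem_insert_self _ _)
    obtain ⟨t, ht, hxt⟩ := M.mem_subF.1 (hXT hx)
    by_cases htp : t ∈ M.subt p
    · exact M.mem_subF.2 ⟨p, Finset.mem_insert_self _ _, M.subt_subset_subt htp hxt⟩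
    · exact M.mem_subF.2 ⟨t, Finset.mem_insert_of_mem (Finset.mem_filter.2 ⟨ht, htp⟩), hxt⟩
  · simp only [Finset.mem_insert, Finset.mem_filter]
    rintro i (rfl | ⟨hi, -⟩) k (rfl | ⟨hk, hkp⟩) hne
    · exact absurd rfl hne
    · exact hkp
    · exact fun h => hp (M.mem_subF.2 ⟨i, hTX hi, h⟩)
    · exact hanti i hi k hk hne

end TopSet

lemma sum_pi_insert_filter {T : Finset S} {p : S} (hp : p ∉ T) :
    ∑ i ∈ insert p (T.filter fun t => t ∉ M.subt p), M.pi i =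
      ∑ i ∈ T, M.pi i + (1 - (∑ i ∈ T ∩ M.subt p, M.pi i) / M.pi p) * M.pi p := by
  rw [Finset.sum_insert fun h => hp (Finset.mem_filter.1 h).1,
    ← Finset.sum_filter_add_sum_filter_not T (· ∈ M.subt p), Finset.filter_mem_eq_inter]
  field_simp [(M.pi_pos p).ne']
  ring

section TopMass

/-- `Top(P ∩ sub(a))`. -/
noncomputable def topIn (P : Finset S) (a : S) : Finset S :=
  (P ∩ M.subt a).filter fun x => ∀ t ∈ P ∩ M.subt a, x ∈ M.subt t → t = x

noncomputable def topMass (P : Finset S) (a : S) : ℝ :=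
  ∑ t ∈ M.topIn P a, M.pi t

variable {P : Finset S}

lemma topIn_subset (P : Finset S) (a : S) : M.topIn P a ⊆ P ∩ M.subt a :=
  Finset.filter_subset _ _

lemma topMass_nonneg (P : Finset S) (a : S) : 0 ≤ M.topMass P a :=
  Finset.sum_nonneg fun t _ => (M.pi_pos t).le

lemma topIn_of_mem {a : S} (h : a ∈ P) : M.topIn P a = {a} := by
  ext x
  simp only [topIn, Finset.mem_filter, Finset.mem_inter, Finset.mem_singleton]
  constructor
  · rintro ⟨⟨-, hxa⟩, hstop⟩
    exact (hstop a ⟨h, M.self_mem_subt a⟩ hxa).symm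
  · rintro rfl
    exact ⟨⟨h, M.self_mem_subt x⟩, fun t ht hxt =>
      M.eq_of_mem_anc_of_mem_anc (M.mem_subt.1 hxt) (M.mem_subt.1 ht.2)⟩

lemma topMass_of_mem {a : S} (h : a ∈ P) : M.topMass P a = M.pi a := by
  rw [topMass, M.topIn_of_mem h, Finset.sum_singleton]

lemma topIn_of_notMem {a : S} (h : a ∉ P) :
    M.topIn P a = (M.child a).biUnion (M.topIn P) := by
  ext x
  simp only [topIn, Finset.mem_filter, Finset.mem_inter, Finset.mem_biUnion]
  constructor
  · rintro ⟨⟨hxP, hxa⟩, hstop⟩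
    obtain ⟨k, hk, hxk⟩ := M.exists_child_of_mem_subt hxa (by rintro rfl; exact h hxP)
    exact ⟨k, hk, ⟨hxP, hxk⟩, fun t ht => hstop t ⟨ht.1, M.subt_subset_of_mem_child hk ht.2⟩⟩
  · rintro ⟨k, hk, ⟨hxP, hxk⟩, hstop⟩
    refine ⟨⟨hxP, M.subt_subset_of_mem_child hk hxk⟩, fun t ht hxt => hstop t ⟨ht.1, ?_⟩ hxt⟩
    obtain ⟨k', hk', htk'⟩ := M.exists_child_of_mem_subt ht.2 (by rintro rfl; exact h ht.1)
    obtain rfl : k = k' := by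
      by_contra hne
      exact Finset.disjoint_left.1 (M.disjoint_subt_of_mem_child hk hk' hne) hxk
        (M.subt_subset_subt htk' hxt)
    exact htk'

lemma topMass_of_notMem {a : S} (h : a ∉ P) :
    M.topMass P a = ∑ k ∈ M.child a, M.topMass P k := by
  rw [topMass, M.topIn_of_notMem h, Finset.sum_biUnion]
  · rfl
  intro k hk k' hk' hne
  exact Finset.disjoint_left.2 fun t ht ht' => Finset.disjoint_left.1
    (M.disjoint_subt_of_mem_child hk hk' hne)
    (Finset.mem_inter.1 (M.topIn_subset P k ht)).2 (Finset.mem_inter.1 (M.topIn_subset P k' ht')).2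

lemma isTopSet_topIn_root (P : Finset S) : M.IsTopSet P (M.topIn P M.r) := by
  refine ⟨fun x hx => (Finset.mem_inter.1 (M.topIn_subset P M.r hx)).1, fun x hx => ?_,
    fun i hi k hk hne hki => hne ((Finset.mem_filter.1 hk).2 i (M.topIn_subset P M.r hi) hki)⟩
  -- the highest element of `P` above `x` is a top element
  obtain ⟨t, ht, hmin⟩ := (P.filter (· ∈ M.anc x)).exists_min_image M.level
    ⟨x, Finset.mem_filter.2 ⟨hx, M.self_mem_anc x⟩⟩
  rw [Finset.mem_filter] at ht
  refine M.mem_subF.2 ⟨t, Finset.mem_filter.2 ⟨Finset.mem_inter.2 ⟨ht.1, M.mem_subt_root t⟩,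
    fun t' ht' htt' => ?_⟩, M.mem_subt.2 ht.2⟩
  by_contra hne
  have h₁ := M.level_lt_of_mem_anc (M.mem_subt.1 htt') hne
  have h₂ := hmin t' (Finset.mem_filter.2 ⟨(Finset.mem_inter.1 ht').1,
    M.mem_anc_trans ht.2 (M.mem_subt.1 htt')⟩)
  omega

lemma topMass_root_le_sum {X T : Finset S} (hPX : P ⊆ X) (hT : M.IsTopSet X T) :
    M.topMass P M.r ≤ ∑ y ∈ T, M.topMass P y := by
  have hcover : M.topIn P M.r = T.biUnion fun y => M.topIn P M.r ∩ M.subt y := by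
    ext t
    simp only [Finset.mem_biUnion, Finset.mem_inter]
    refine ⟨fun ht => ?_, fun ⟨_, _, ht, _⟩ => ht⟩
    obtain ⟨y, hy, hty⟩ :=
      M.mem_subF.1 (hT.2.1 (hPX (Finset.mem_inter.1 (M.topIn_subset P M.r ht)).1))
    exact ⟨y, hy, ht, hty⟩
  have hdisj : (T : Set S).PairwiseDisjoint fun y => M.topIn P M.r ∩ M.subt y := by
    intro y hy y' hy' hne
    refine Finset.disjoint_left.2 fun t ht ht' => ?_
    rcases M.mem_anc_total (M.mem_subt.1 (Finset.mem_inter.1 ht).2)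
      (M.mem_subt.1 (Finset.mem_inter.1 ht').2) with h | h
    · exact hT.2.2 y hy y' hy' hne (M.mem_subt.2 h)
    · exact hT.2.2 y' hy' y hy (Ne.symm hne) (M.mem_subt.2 h)
  have hpiece : ∀ y, M.topIn P M.r ∩ M.subt y ⊆ M.topIn P y := fun y t ht => by
    obtain ⟨ht, hty⟩ := Finset.mem_inter.1 ht
    simp only [topIn, Finset.mem_filter, Finset.mem_inter] at ht ⊢
    exact ⟨⟨ht.1.1, hty⟩, fun t' ht' => ht.2 t' ⟨ht'.1, M.mem_subt_root t'⟩⟩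
  rw [topMass, hcover, Finset.sum_biUnion hdisj]
  exact Finset.sum_le_sum fun y _ => Finset.sum_le_sum_of_subset_of_nonneg (hpiece y)
    fun t _ _ => (M.pi_pos t).le

end TopMass

section OneSided

variable {M} {c : S → ℝ} {V : ℝ → S → ℝ} {P : Finset S} {γ : ℝ}

lemma mul_topMass_le (hV : M.IsSkiValue c V) (hc : ∀ i, 0 < c i)
    (hP : ∀ x ∈ P, γ ≤ c x + M.Vf V γ x) (hPc : ∀ x ∉ P, c x + M.Vf V γ x ≤ γ) (a : S) :
    γ * M.topMass P a ≤ V γ a * M.pi a := by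
  induction a using M.induction_child with
  | step a ih =>
    by_cases ha : a ∈ P
    · rw [M.topMass_of_mem ha, V_eq_of_le hV (hP a ha)]
    · have hchild : γ * M.topMass P a ≤ M.Vf V γ a * M.pi a := by
        rw [M.topMass_of_notMem ha, Finset.mul_sum, Vf_mul_pi]
        exact Finset.sum_le_sum ih
      rw [V_eq_of_ge hV (hPc a ha)]
      nlinarith [hc a, M.pi_pos a]

lemma mul_sum_topMass_child_le (hV : M.IsSkiValue c V) (hc : ∀ i, 0 < c i)
    (hP : ∀ x ∈ P, γ ≤ c x + M.Vf V γ x) (hPc : ∀ x ∉ P, c x + M.Vf V γ x ≤ γ) (a : S) :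
    γ * ∑ k ∈ M.child a, M.topMass P k ≤ M.Vf V γ a * M.pi a := by
  rw [Finset.mul_sum, Vf_mul_pi]
  exact Finset.sum_le_sum fun k _ => mul_topMass_le hV hc hP hPc k

lemma topMass_lt_pi (hV : M.IsSkiValue c V) (hc : ∀ i, 0 < c i)
    (hP : ∀ x ∈ P, γ ≤ c x + M.Vf V γ x) (hPc : ∀ x ∉ P, c x + M.Vf V γ x ≤ γ) (hγ : 0 ≤ γ)
    {a : S} (ha : a ∉ P) : M.topMass P a < M.pi a := by
  have hchild := mul_sum_topMass_child_le hV hc hP hPc a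
  rw [← M.topMass_of_notMem ha] at hchild
  have hVf : M.Vf V γ a ≤ γ - c a := by linarith [hPc a ha]
  have hpi := M.pi_pos a
  have hm := M.topMass_nonneg P a
  have hγpos : 0 < γ := by nlinarith [hc a]
  by_contra! hle
  nlinarith [hc a]

lemma topMass_le_pi (hV : M.IsSkiValue c V) (hc : ∀ i, 0 < c i)
    (hP : ∀ x ∈ P, γ ≤ c x + M.Vf V γ x) (hPc : ∀ x ∉ P, c x + M.Vf V γ x ≤ γ) (hγ : 0 ≤ γ)
    (a : S) : M.topMass P a ≤ M.pi a := by
  by_cases ha : a ∈ P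
  · exact (M.topMass_of_mem ha).le
  · exact (topMass_lt_pi hV hc hP hPc hγ ha).le

lemma mul_topMass_le_sub_V (hV : M.IsSkiValue c V) (hc : ∀ i, 0 < c i) (hγ : 0 ≤ γ) {Δ : ℝ}
    (hΔ : 0 ≤ Δ) (hP : ∀ x ∈ P, γ + Δ ≤ c x + M.Vf V γ x)
    (hPc : ∀ x ∉ P, c x + M.Vf V γ x ≤ γ) (a : S) :
    Δ * M.topMass P a ≤ (V (γ + Δ) a - V γ a) * M.pi a := by
  have hP' : ∀ x ∈ P, γ ≤ c x + M.Vf V γ x := fun x hx => by linarith [hP x hx]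
  induction a using M.induction_child with
  | step a ih =>
    by_cases ha : a ∈ P
    · have hstop : γ + Δ ≤ c a + M.Vf V (γ + Δ) a :=
        (hP a ha).trans (by linarith [Vf_mono hV (by linarith : γ ≤ γ + Δ) a])
      rw [M.topMass_of_mem ha, V_eq_of_le hV hstop, V_eq_of_le hV (hP' a ha)]
      exact le_of_eq (by ring)
    · have hchild : Δ * M.topMass P a ≤ (M.Vf V (γ + Δ) a - M.Vf V γ a) * M.pi a := by
        rw [M.topMass_of_notMem ha, Finset.mul_sum, sub_Vf_mul_pi]
        exact Finset.sum_le_sum ih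
      have hle := topMass_le_pi hV hc hP' hPc hγ a
      rw [V_eq_min hV (γ + Δ), V_eq_of_ge hV (hPc a ha)]
      rcases min_cases (γ + Δ) (c a + M.Vf V (γ + Δ) a) with ⟨h, -⟩ | ⟨h, -⟩ <;> rw [h]
      · nlinarith [hPc a ha, M.pi_pos a]
      · linarith

lemma sub_V_mul_le_mul_topMass (hV : M.IsSkiValue c V) (hc : ∀ i, 0 < c i) (hγ : 0 < γ) {Δ : ℝ}
    (hΔ : 0 ≤ Δ) (hP : ∀ x ∈ P, γ ≤ c x + M.Vf V γ x) (hPc : ∀ x ∉ P, c x + M.Vf V γ x ≤ γ)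
    (hΔP : ∀ x ∈ P, Δ * M.Vf V γ x ≤ (c x + M.Vf V γ x - γ + Δ) * γ)
    (hΔPc : ∀ x ∉ P, Δ + (c x + M.Vf V γ x) ≤ γ) (a : S) :
    (V γ a - V (γ - Δ) a) * M.pi a ≤ Δ * M.topMass P a := by
  induction a using M.induction_child with
  | step a ih =>
    have hchild : (M.Vf V γ a - M.Vf V (γ - Δ) a) * M.pi a ≤
        Δ * ∑ k ∈ M.child a, M.topMass P k := by
      rw [sub_Vf_mul_pi, Finset.mul_sum]
      exact Finset.sum_le_sum ih
    have hpi := M.pi_pos a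
    by_cases ha : a ∈ P
    · -- `V^f` loses at most the fraction `Δ / γ` of itself, so `a` still stops at `γ - Δ`
      have hloss : γ * (M.Vf V γ a - M.Vf V (γ - Δ) a) ≤ Δ * M.Vf V γ a := by
        refine le_of_mul_le_mul_right ?_ hpi
        have := mul_le_mul_of_nonneg_left (mul_sum_topMass_child_le hV hc hP hPc a) hΔ
        nlinarith
      have hstop : γ - Δ ≤ c a + M.Vf V (γ - Δ) a :=
        le_of_mul_le_mul_left (by nlinarith [hΔP a ha]) hγ
      rw [M.topMass_of_mem ha, V_eq_of_le hV (hP a ha), V_eq_of_le hV hstop]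
      exact le_of_eq (by ring)
    · rw [V_eq_of_ge hV (hPc a ha), V_eq_min hV (γ - Δ), M.topMass_of_notMem ha]
      rcases min_cases (γ - Δ) (c a + M.Vf V (γ - Δ) a) with ⟨h, -⟩ | ⟨h, -⟩ <;> rw [h]
      · have := mul_nonneg hΔ (Finset.sum_nonneg fun k (_ : k ∈ M.child a) =>
          M.topMass_nonneg P k)
        nlinarith [hΔPc a ha]
      · linarith

end OneSided

section Minimizer

variable {c : S → ℝ} {V : ℝ → S → ℝ} {lam mu γ : ℝ}

lemma lam_mul_topMass_le (hV : M.IsSkiValue c V) (hc : ∀ i, 0 < c i) (hlam : 0 ≤ lam)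
    (hγ : 0 ≤ γ) (hmin : ∀ γ', 0 ≤ γ' → mu * γ - lam * V γ M.r ≤ mu * γ' - lam * V γ' M.r) :
    lam * M.topMass (Finset.univ.filter fun x => γ < c x + M.Vf V γ x) M.r ≤ mu := by
  obtain ⟨Δ, hΔ, hΔle⟩ := exists_pos_forall_le_of_pos fun x => c x + M.Vf V γ x - γ
  have hdiff := mul_topMass_le_sub_V hV hc hγ hΔ.le
    (P := Finset.univ.filter fun x => γ < c x + M.Vf V γ x)
    (fun x hx => by linarith [hΔle x (by simp at hx; linarith)])
    (fun x hx => by simpa using hx) M.r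
  rw [M.pi_root, mul_one] at hdiff
  have := hmin (γ + Δ) (by linarith)
  refine le_of_mul_le_mul_left ?_ hΔ
  nlinarith [mul_le_mul_of_nonneg_left hdiff hlam]

lemma le_lam_mul_topMass (hV : M.IsSkiValue c V) (hc : ∀ i, 0 < c i) (hlam : 0 ≤ lam)
    (hγ : 0 < γ) (hmin : ∀ γ', 0 ≤ γ' → mu * γ - lam * V γ M.r ≤ mu * γ' - lam * V γ' M.r) :
    mu ≤ lam * M.topMass (Finset.univ.filter fun x => γ ≤ c x + M.Vf V γ x) M.r := by
  have hVf := Vf_nonneg hV hc hγ.le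
  obtain ⟨δ₁, hδ₁, hle₁⟩ := exists_pos_forall_le_of_pos fun x => γ - (c x + M.Vf V γ x)
  obtain ⟨δ₂, hδ₂, hle₂⟩ :=
    exists_pos_forall_le_of_pos fun x => γ * (c x + M.Vf V γ x - γ) / (M.Vf V γ x + γ)
  -- small enough that no stopping decision taken at `γ` changes at `γ - Δ`
  set Δ := min γ (min δ₁ δ₂)
  have hΔ : 0 < Δ := lt_min hγ (lt_min hδ₁ hδ₂)
  have hΔγ : Δ ≤ γ := min_le_left _ _
  have hΔ₁ : Δ ≤ δ₁ := (min_le_right _ _).trans (min_le_left _ _)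
  have hΔ₂ : Δ ≤ δ₂ := (min_le_right _ _).trans (min_le_right _ _)
  have hΔP : ∀ x ∈ Finset.univ.filter fun x => γ ≤ c x + M.Vf V γ x,
      Δ * M.Vf V γ x ≤ (c x + M.Vf V γ x - γ + Δ) * γ := by
    intro x hx
    have hden : 0 < M.Vf V γ x + γ := by linarith [hVf x]
    rcases (Finset.mem_filter.1 hx).2.lt_or_eq with hlt | heq
    · have := hΔ₂.trans (hle₂ x (div_pos (mul_pos hγ (by linarith)) hden))
      rw [le_div_iff₀ hden] at this
      nlinarith
    · nlinarith [hc x]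
  have hdiff := sub_V_mul_le_mul_topMass hV hc hγ hΔ.le (by simp)
    (fun x hx => by simp at hx; linarith)
    hΔP (fun x hx => by linarith [hle₁ x (by simp at hx; linarith)]) M.r
  rw [M.pi_root, mul_one] at hdiff
  have := hmin (γ - Δ) (by linarith)
  refine le_of_mul_le_mul_left ?_ hΔ
  nlinarith [mul_le_mul_of_nonneg_left hdiff hlam]

lemma eq_zero_of_lt (hV : M.IsSkiValue c V) (hc : ∀ i, 0 < c i) (hlam : 0 ≤ lam) (hγ : 0 ≤ γ)
    (hmin : ∀ γ', 0 ≤ γ' → mu * γ - lam * V γ M.r ≤ mu * γ' - lam * V γ' M.r)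
    (hlt : lam < mu) : γ = 0 := by
  have h₀ := hmin 0 le_rfl
  simp only [V_zero hV hc, mul_zero, sub_self] at h₀
  nlinarith [mul_le_mul_of_nonneg_left (V_le hV γ M.r) hlam]

end Minimizer

section Prefix

variable {c : S → ℝ} {V : ℝ → S → ℝ} {lam mu γ : ℝ} {e : Fin (Fintype.card S) ≃ S}
  {m : ℕ}

theorem mem_subF_orderPrefix_of_lt (hV : M.IsSkiValue c V) (hc : ∀ i, 0 < c i) (hlam : 0 ≤ lam)
    (hγ : 0 ≤ γ) (hmin : ∀ γ', 0 ≤ γ' → mu * γ - lam * V γ M.r ≤ mu * γ' - lam * V γ' M.r)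
    (horder : ∀ a b, γ < c a + M.Vf V γ a → c b + M.Vf V γ b ≤ γ → e.symm a < e.symm b)
    (hmax : ∀ m', m < m' → m' ≤ Fintype.card S → ∀ T', M.IsTopSet (orderPrefix e m') T' →
      mu < lam * ∑ i ∈ T', M.pi i)
    {b : S} (hb : γ < c b + M.Vf V γ b) : b ∈ M.subF (orderPrefix e m) := by
  set A := Finset.univ.filter fun x => γ < c x + M.Vf V γ x with hA
  have hprefix : orderPrefix e A.card = A :=
    orderPrefix_card_eq fun x hx y hy => horder x y (by simpa [hA] using hx)
      (by simpa [hA] using hy)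
  have hbA : (e.symm b : ℕ) < A.card := by
    rw [← mem_orderPrefix, hprefix]
    simpa [hA] using hb
  by_contra hbF
  have hbm : ¬ (e.symm b : ℕ) < m := fun h => hbF (M.mem_subF_of_mem (mem_orderPrefix.2 h))
  have hT : M.IsTopSet (orderPrefix e A.card) (M.topIn A M.r) := by
    rw [hprefix]
    exact M.isTopSet_topIn_root A
  exact (M.lam_mul_topMass_le hV hc hlam hγ hmin).not_gt
    (hmax A.card (by omega) (Finset.card_le_univ A) _ hT)

theorem le_of_position_le (hV : M.IsSkiValue c V) (hc : ∀ i, 0 < c i) (hlam : 0 < lam)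
    (hγ : 0 ≤ γ) (hmin : ∀ γ', 0 ≤ γ' → mu * γ - lam * V γ M.r ≤ mu * γ' - lam * V γ' M.r)
    (horder1 : ∀ a b, γ < c a + M.Vf V γ a → c b + M.Vf V γ b ≤ γ → e.symm a < e.symm b)
    (horder2 : ∀ a b, c a + M.Vf V γ a = γ → c b + M.Vf V γ b < γ → e.symm a < e.symm b)
    {Tm : Finset S} (hTm : M.IsTopSet (orderPrefix e m) Tm)
    (hserve : lam * ∑ i ∈ Tm, M.pi i ≤ mu) {s : S} (hs : (e.symm s : ℕ) ≤ m)
    (hcon : lam * ∑ i ∈ Tm, M.pi i < mu ∨ s ∈ Tm) : γ ≤ c s + M.Vf V γ s := by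
  by_contra! hsγ
  have hγpos : 0 < γ := by linarith [hc s, Vf_nonneg hV hc hγ s]
  set P := Finset.univ.filter fun x => γ ≤ c x + M.Vf V γ x with hPdef
  have hP : ∀ x ∈ P, γ ≤ c x + M.Vf V γ x := fun x hx => by simpa [hPdef] using hx
  have hPc : ∀ x ∉ P, c x + M.Vf V γ x ≤ γ := fun x hx => by simp [hPdef] at hx; linarith
  have hsP : s ∉ P := fun h => (hP s h).not_gt hsγ
  have hPm : P ⊆ orderPrefix e m := fun x hx => mem_orderPrefix.2 <| by
    have : e.symm x < e.symm s := (hP x hx).lt_or_eq.elim (fun h => horder1 x s h hsγ.le)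
      fun h => horder2 x s h.symm hsγ
    exact lt_of_lt_of_le this hs
  have hμ := M.le_lam_mul_topMass hV hc hlam.le hγpos hmin
  have hroot := mul_le_mul_of_nonneg_left (M.topMass_root_le_sum hPm hTm) hlam.le
  have hle : ∀ y ∈ Tm, M.topMass P y ≤ M.pi y := fun y _ => topMass_le_pi hV hc hP hPc hγ y
  rcases hcon with hlt | hsT
  · nlinarith [mul_le_mul_of_nonneg_left (Finset.sum_le_sum hle) hlam.le]
  · nlinarith [mul_lt_mul_of_pos_left (Finset.sum_lt_sum hle
      ⟨s, hsT, topMass_lt_pi hV hc hP hPc hγ hsP⟩) hlam]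

end Prefix

/-- The equations (T-1)–(T-6) of the fluid equilibrium, for `Om = o_[m]`, `Tm = Top(o_[m])`,
the partially-served state `pOpt` and `nuP = ν^o_p`. -/
structure IsFluidEquilibrium (lam : ℝ) (Om Tm : Finset S) (pOpt : Option S) (nuP : ℝ)
    (q ν : S → ℝ) : Prop where
  unreduced : ∀ i, i ∉ M.subF Om → (∀ pp, pOpt = some pp → i ∉ M.subt pp) →
    q i = lam * M.pi i ∧ ν i = 0
  fully_blocked : ∀ i ∈ Tm, (∀ pp, pOpt = some pp → i ∉ M.subt pp) →
    q i = lam * M.pi i ∧ ν i = lam * M.pi i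
  empty : ∀ i ∈ M.subF Om, i ∉ Tm → q i = 0 ∧ ν i = 0
  partially_served : ∀ pp, pOpt = some pp → q pp = lam * M.pi pp ∧ ν pp = nuP
  partially_blocked : ∀ pp, pOpt = some pp → ∀ i ∈ Tm ∩ M.subt pp,
    q i = lam * M.pi i - nuP * M.pi i / M.pi pp ∧ ν i = q i
  partially_reduced : ∀ pp, pOpt = some pp → ∀ i ∈ M.subt pp, i ≠ pp → i ∉ M.subF Om →
    q i = lam * M.pi i - nuP * M.pi i / M.pi pp ∧ ν i = 0

namespace IsFluidEquilibrium

variable {M} {lam mu : ℝ} {Om Tm : Finset S} {pOpt : Option S} {pp : S} {nuP : ℝ}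
  {q ν : S → ℝ} {e : Fin (Fintype.card S) ≃ S} {m : ℕ}

lemma nu_eq_of_mem_subF (hE : M.IsFluidEquilibrium lam Om Tm pOpt nuP q ν) {i : S}
    (hi : i ∈ M.subF Om) : ν i = q i := by
  by_cases hT : i ∈ Tm
  · by_cases hp : ∃ pp, pOpt = some pp ∧ i ∈ M.subt pp
    · obtain ⟨pp, hp, hip⟩ := hp
      exact (hE.partially_blocked pp hp i (Finset.mem_inter.2 ⟨hT, hip⟩)).2
    · simp only [not_exists, not_and] at hp
      obtain ⟨h₁, h₂⟩ := hE.fully_blocked i hT hp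
      rw [h₁, h₂]
  · obtain ⟨h₁, h₂⟩ := hE.empty i hi hT
    rw [h₁, h₂]

lemma mem_or_eq_of_nu_ne_zero (hE : M.IsFluidEquilibrium lam Om Tm pOpt nuP q ν) {a : S}
    (ha : ν a ≠ 0) : a ∈ Tm ∨ pOpt = some a := by
  by_contra! h
  apply ha
  by_cases hF : a ∈ M.subF Om
  · exact (hE.empty a hF h.1).2
  by_cases hp : ∃ pp, pOpt = some pp ∧ a ∈ M.subt pp
  · obtain ⟨pp, hp, hap⟩ := hp
    exact (hE.partially_reduced pp hp a hap (by rintro rfl; exact h.2 hp) hF).2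
  · simp only [not_exists, not_and] at hp
    exact (hE.unreduced a hF hp).2

lemma flow_of_pa_mem_subF (hE : M.IsFluidEquilibrium lam Om Tm pOpt nuP q ν)
    (hTm : M.IsTopSet Om Tm) {i : S} (hi : i ≠ M.r) (hpa : M.pa i ∈ M.subF Om) :
    q i = (q (M.pa i) - ν (M.pa i)) * M.p i := by
  have hiF : i ∈ M.subF Om :=
    M.mem_subF_of_mem_subt hpa ((M.mem_subt_of_ne_root hi).2 (Or.inr (M.self_mem_subt _)))
  rw [(hE.empty i hiF (hTm.notMem_of_pa_mem hi hpa)).1, hE.nu_eq_of_mem_subF hpa, sub_self,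
    zero_mul]

lemma origFeasible_of_none (hE : M.IsFluidEquilibrium lam Om Tm none nuP q ν) (hlam : 0 ≤ lam)
    (hTm : M.IsTopSet Om Tm) (hserve : lam * ∑ i ∈ Tm, M.pi i ≤ mu) :
    M.OrigFeasible lam mu q ν ∧ ∑ i, ν i = lam * ∑ i ∈ Tm, M.pi i := by
  have hnone : ∀ i pp, (none : Option S) = some pp → i ∉ M.subt pp := by simp
  have hout : ∀ i ∉ M.subF Om, q i = lam * M.pi i ∧ ν i = 0 :=
    fun i hi => hE.unreduced i hi (hnone i)
  have hT : ∀ i ∈ Tm, q i = lam * M.pi i ∧ ν i = lam * M.pi i :=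
    fun i hi => hE.fully_blocked i hi (hnone i)
  have hsum : ∑ i, ν i = lam * ∑ i ∈ Tm, M.pi i := by
    rw [Finset.mul_sum, ← Finset.sum_subset (Finset.subset_univ Tm) fun i _ hi => ?_]
    · exact Finset.sum_congr rfl fun i hi => (hT i hi).2
    · by_contra h
      simpa [hi] using hE.mem_or_eq_of_nu_ne_zero h
  have hν : ∀ i, 0 ≤ ν i ∧ ν i ≤ q i := fun i => by
    have := mul_nonneg hlam (M.pi_pos i).le
    by_cases hF : i ∈ M.subF Om
    · rw [hE.nu_eq_of_mem_subF hF]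
      by_cases hiT : i ∈ Tm
      · simp [(hT i hiT).1, this]
      · simp [(hE.empty i hF hiT).1]
    · simp [(hout i hF).1, (hout i hF).2, this]
  refine ⟨⟨fun i => (hν i).1.trans (hν i).2, fun i => (hν i).1, ?_, fun i hi => ?_,
    fun i => (hν i).2, hsum ▸ hserve⟩, hsum⟩
  · by_cases hF : M.r ∈ M.subF Om
    · rw [(hT _ (hTm.root_mem hF)).1, M.pi_root, mul_one]
    · rw [(hout _ hF).1, M.pi_root, mul_one]
  · by_cases hpa : M.pa i ∈ M.subF Om
    · exact hE.flow_of_pa_mem_subF hTm hi hpa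
    have hqi : q i = lam * M.pi i := by
      by_cases hF : i ∈ M.subF Om
      · exact (hT i (hTm.mem_of_pa_notMem hi hF hpa)).1
      · exact (hout i hF).1
    rw [hqi, (hout _ hpa).1, (hout _ hpa).2, M.pi_of_ne_root hi]
    ring

lemma q_sub_nu_of_some (hE : M.IsFluidEquilibrium lam Om Tm (some pp) nuP q ν) {j : S}
    (hj : j ∉ M.subF Om) :
    q j - ν j = (if j ∈ M.subt pp then lam - nuP / M.pi pp else lam) * M.pi j := by
  split_ifs with hjp
  · by_cases hjpp : j = pp
    · subst hjpp
      rw [(hE.partially_served j rfl).1, (hE.partially_served j rfl).2]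
      field_simp [(M.pi_pos j).ne']
    · obtain ⟨h₁, h₂⟩ := hE.partially_reduced pp rfl j hjp hjpp hj
      rw [h₁, h₂]
      ring
  · obtain ⟨h₁, h₂⟩ := hE.unreduced j hj (by rintro _ ⟨⟩; exact hjp)
    rw [h₁, h₂]
    ring

lemma q_of_pa_notMem_of_some (hE : M.IsFluidEquilibrium lam Om Tm (some pp) nuP q ν)
    (hTm : M.IsTopSet Om Tm) {i : S} (hi : i ≠ M.r) (hpa : M.pa i ∉ M.subF Om) :
    q i = (if M.pa i ∈ M.subt pp then lam - nuP / M.pi pp else lam) * M.pi i := by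
  have hTi : i ∈ M.subF Om → i ∈ Tm := fun hF => hTm.mem_of_pa_notMem hi hF hpa
  split_ifs with hpap
  · have hip : i ∈ M.subt pp := (M.mem_subt_of_ne_root hi).2 (Or.inr hpap)
    by_cases hF : i ∈ M.subF Om
    · rw [(hE.partially_blocked pp rfl i (Finset.mem_inter.2 ⟨hTi hF, hip⟩)).1]
      ring
    · have hipp : i ≠ pp := by
        rintro rfl
        exact M.pa_notMem_subt hi hpap
      rw [(hE.partially_reduced pp rfl i hip hipp hF).1]
      ring
  · by_cases hipp : i = pp
    · subst hipp
      exact (hE.partially_served i rfl).1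
    have hno : ∀ x, some pp = some x → i ∉ M.subt x := by
      rintro _ ⟨⟩ h
      exact ((M.mem_subt_of_ne_root hi).1 h).elim hipp hpap
    by_cases hF : i ∈ M.subF Om
    · exact (hE.fully_blocked i (hTi hF) hno).1
    · exact (hE.unreduced i hF hno).1

lemma q_root_of_some (hE : M.IsFluidEquilibrium lam Om Tm (some pp) nuP q ν)
    (hTm : M.IsTopSet Om Tm) : q M.r = lam := by
  suffices q M.r = lam * M.pi M.r by rwa [M.pi_root, mul_one] at this
  by_cases hpp : pp = M.r
  · subst hpp
    exact (hE.partially_served _ rfl).1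
  have hno : ∀ x, some pp = some x → M.r ∉ M.subt x := by
    rintro _ ⟨⟩ h
    exact hpp (M.root_mem_subt.1 h)
  by_cases hF : M.r ∈ M.subF Om
  · exact (hE.fully_blocked _ (hTm.root_mem hF) hno).1
  · exact (hE.unreduced _ hF hno).1

lemma nu_nonneg_and_le_q_of_some (hE : M.IsFluidEquilibrium lam Om Tm (some pp) nuP q ν)
    (hlam : 0 ≤ lam) (hnu : 0 ≤ nuP) (hnuP : nuP ≤ lam * M.pi pp) (i : S) :
    0 ≤ ν i ∧ ν i ≤ q i := by
  have hpp := M.pi_pos pp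
  have hlamPi : 0 ≤ lam * M.pi i := mul_nonneg hlam (M.pi_pos i).le
  have hρ : 0 ≤ lam * M.pi i - nuP * M.pi i / M.pi pp := by
    rw [show lam * M.pi i - nuP * M.pi i / M.pi pp = (lam * M.pi pp - nuP) * M.pi i / M.pi pp by
      field_simp]
    exact div_nonneg (mul_nonneg (by linarith) (M.pi_pos i).le) hpp.le
  have hno : i ∉ M.subt pp → ∀ x, some pp = some x → i ∉ M.subt x := by
    rintro h _ ⟨⟩
    exact h
  by_cases hF : i ∈ M.subF Om
  · rw [hE.nu_eq_of_mem_subF hF]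
    refine ⟨?_, le_rfl⟩
    by_cases hT : i ∈ Tm
    · by_cases hip : i ∈ M.subt pp
      · rw [(hE.partially_blocked pp rfl i (Finset.mem_inter.2 ⟨hT, hip⟩)).1]
        exact hρ
      · rw [(hE.fully_blocked i hT (hno hip)).1]
        exact hlamPi
    · rw [(hE.empty i hF hT).1]
  by_cases hipp : i = pp
  · subst hipp
    rw [(hE.partially_served i rfl).1, (hE.partially_served i rfl).2]
    exact ⟨hnu, hnuP⟩
  by_cases hip : i ∈ M.subt pp
  · obtain ⟨h₁, h₂⟩ := hE.partially_reduced pp rfl i hip hipp hF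
    rw [h₁, h₂]
    exact ⟨le_rfl, hρ⟩
  · rw [(hE.unreduced i hF (hno hip)).1, (hE.unreduced i hF (hno hip)).2]
    exact ⟨le_rfl, hlamPi⟩

lemma sum_nu_of_some (hE : M.IsFluidEquilibrium lam Om Tm (some pp) nuP q ν) (hpp : pp ∉ Tm) :
    ∑ i, ν i = lam * ∑ i ∈ Tm, M.pi i + nuP * (1 - (∑ i ∈ Tm ∩ M.subt pp, M.pi i) / M.pi pp) := by
  have hT : ∀ i ∈ Tm,
      ν i = lam * M.pi i - if i ∈ M.subt pp then nuP * M.pi i / M.pi pp else 0 := by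
    intro i hi
    split_ifs with hip
    · obtain ⟨h₁, h₂⟩ := hE.partially_blocked pp rfl i (Finset.mem_inter.2 ⟨hi, hip⟩)
      rw [h₂, h₁]
    · rw [(hE.fully_blocked i hi (by rintro _ ⟨⟩; exact hip)).2, sub_zero]
  rw [← Finset.sum_subset (Finset.subset_univ (insert pp Tm)) fun i _ hi => ?_,
    Finset.sum_insert hpp, Finset.sum_congr rfl hT, Finset.sum_sub_distrib, Finset.sum_ite_mem,
    (hE.partially_served pp rfl).2, ← Finset.mul_sum, ← Finset.sum_div, ← Finset.mul_sum]
  · field_simp [(M.pi_pos pp).ne']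
    ring
  · by_contra h
    rcases hE.mem_or_eq_of_nu_ne_zero h with h' | h'
    · exact hi (Finset.mem_insert_of_mem h')
    · exact hi (Finset.mem_insert.2 (Or.inl (Option.some_injective _ h').symm))

lemma origFeasible_of_some (hE : M.IsFluidEquilibrium lam Om Tm (some pp) nuP q ν)
    (hlam : 0 ≤ lam) (hTm : M.IsTopSet Om Tm) (hppF : pp ∉ M.subF Om) (hnu : 0 ≤ nuP)
    (hnuP : nuP ≤ lam * M.pi pp)
    (hsum : lam * ∑ i ∈ Tm, M.pi i + nuP * (1 - (∑ i ∈ Tm ∩ M.subt pp, M.pi i) / M.pi pp) = mu) :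
    M.OrigFeasible lam mu q ν ∧ ∑ i, ν i = mu := by
  have hν := hE.nu_nonneg_and_le_q_of_some hlam hnu hnuP
  have hνsum : ∑ i, ν i = mu :=
    (hE.sum_nu_of_some fun h => hppF (M.mem_subF_of_mem (hTm.1 h))).trans hsum
  refine ⟨⟨fun i => (hν i).1.trans (hν i).2, fun i => (hν i).1, hE.q_root_of_some hTm,
    fun i hi => ?_, fun i => (hν i).2, hνsum.le⟩, hνsum⟩
  by_cases hpa : M.pa i ∈ M.subF Om
  · exact hE.flow_of_pa_mem_subF hTm hi hpa
  · rw [hE.q_of_pa_notMem_of_some hTm hi hpa, hE.q_sub_nu_of_some hpa, M.pi_of_ne_root hi]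
    ring

theorem origFeasible_and_saturated
    (hE : M.IsFluidEquilibrium lam (orderPrefix e m) Tm pOpt nuP q ν) (hlam : 0 < lam)
    (hm : m ≤ Fintype.card S) (hTm : M.IsTopSet (orderPrefix e m) Tm)
    (hserve : lam * ∑ i ∈ Tm, M.pi i ≤ mu)
    (hmax : ∀ m', m < m' → m' ≤ Fintype.card S → ∀ T', M.IsTopSet (orderPrefix e m') T' →
      mu < lam * ∑ i ∈ T', M.pi i)
    (hpsome : ∀ h : m < Fintype.card S, lam * ∑ i ∈ Tm, M.pi i < mu → pOpt = some (e ⟨m, h⟩))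
    (hpnone : (m = Fintype.card S ∨ lam * ∑ i ∈ Tm, M.pi i = mu) → pOpt = none)
    (hnuP : ∀ pp, pOpt = some pp →
      nuP = (mu - lam * ∑ i ∈ Tm, M.pi i) / (1 - (∑ i ∈ Tm ∩ M.subt pp, M.pi i) / M.pi pp)) :
    M.OrigFeasible lam mu q ν ∧ (∑ i, ν i = mu ∨ lam < mu) := by
  cases pOpt with
  | none =>
    obtain ⟨hF, hsum⟩ := hE.origFeasible_of_none hlam.le hTm hserve
    refine ⟨hF, hserve.eq_or_lt.imp hsum.trans fun hlt => ?_⟩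
    -- capacity is left but no state is partially served: `o_[m]` is all of `S`
    have hm' : Fintype.card S ≤ m := not_lt.1 fun h => by simpa using hpsome h hlt
    have hr : M.r ∈ Tm := hTm.root_mem (M.mem_subF_of_mem (mem_orderPrefix.2 (by omega)))
    calc lam = lam * M.pi M.r := by rw [M.pi_root, mul_one]
      _ ≤ lam * ∑ i ∈ Tm, M.pi i := mul_le_mul_of_nonneg_left
          (Finset.single_le_sum (fun i _ => (M.pi_pos i).le) hr) hlam.le
      _ < mu := hlt
  | some pp =>
    obtain ⟨hmc, rfl, hlt⟩ := partial_state_spec hm hpsome hpnone hserve rfl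
    have hppT : e ⟨m, hmc⟩ ∉ Tm := fun h => by simpa [mem_orderPrefix] using hTm.1 h
    have hppF : e ⟨m, hmc⟩ ∉ M.subF (orderPrefix e m) := fun hF =>
      (mul_pos hlam (M.pi_pos _)).ne' ((hE.partially_served _ rfl).1.symm.trans
        (hE.empty _ hF hppT).1)
    -- `o_[m+1]` no longer fits into the capacity, which bounds `nuP`
    have hmax' := hmax (m + 1) (lt_add_one m) hmc _ (by
      rw [orderPrefix_succ hmc]
      exact hTm.insert hppF)
    rw [M.sum_pi_insert_filter hppT] at hmax'
    obtain ⟨hnu, hnule, hsum⟩ := partial_rate_bounds hlam (M.pi_pos _) hlt hmax' (hnuP _ rfl)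
    exact (hE.origFeasible_of_some hlam.le hTm hppF hnu hnule hsum).imp_right Or.inl

end IsFluidEquilibrium

end TreeMC

theorem fluid_equilibrium_optimal_general {S : Type*} [Fintype S] [DecidableEq S]
    (M : TreeMC S) (c : S → ℝ) (hc : ∀ i, 0 < c i)
    (V : ℝ → S → ℝ) (hV : M.IsSkiValue c V)
    (lam mu : ℝ) (hlam0 : 0 < lam)
    (γstar : ℝ) (hγ0 : 0 ≤ γstar)
    (hγmin : ∀ γ : ℝ, 0 ≤ γ →
      mu * γstar - lam * V γstar M.r ≤ mu * γ - lam * V γ M.r)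
    (e : Fin (Fintype.card S) ≃ S)
    -- the ordering ranks states with index above `γ*` first, then those equal to `γ*`,
    -- then those below `γ*`
    (horder1 : ∀ a b : S, γstar < c a + M.Vf V γstar a →
      c b + M.Vf V γstar b ≤ γstar → e.symm a < e.symm b)
    (horder2 : ∀ a b : S, c a + M.Vf V γstar a = γstar →
      c b + M.Vf V γstar b < γstar → e.symm a < e.symm b)
    (m : ℕ) (hm : m ≤ Fintype.card S)
    (Om : Finset S)
    (hOm : Om = (Finset.univ.filter fun j : Fin (Fintype.card S) => (j : ℕ) < m).image ⇑e)
    (Tm : Finset S) (hTm : M.IsTopSet Om Tm)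
    (hserve : lam * ∑ i ∈ Tm, M.pi i ≤ mu)
    (hmax : ∀ m' : ℕ, m < m' → m' ≤ Fintype.card S → ∀ T' : Finset S,
      M.IsTopSet
        ((Finset.univ.filter fun j : Fin (Fintype.card S) => (j : ℕ) < m').image ⇑e) T' →
      mu < lam * ∑ i ∈ T', M.pi i)
    (pOpt : Option S)
    (hpsome : ∀ h : m < Fintype.card S,
      lam * ∑ i ∈ Tm, M.pi i < mu → pOpt = some (e ⟨m, h⟩))
    (hpnone : (m = Fintype.card S ∨ lam * ∑ i ∈ Tm, M.pi i = mu) → pOpt = none)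
    (nuP : ℝ)
    (hnuPsome : ∀ pp : S, pOpt = some pp →
      nuP = (mu - lam * ∑ i ∈ Tm, M.pi i) /
        (1 - (∑ i ∈ Tm ∩ M.subt pp, M.pi i) / M.pi pp))
    (q ν : S → ℝ)
    -- (T-1) un-reduced states
    (hq1 : ∀ i : S, i ∉ M.subF Om → (∀ pp : S, pOpt = some pp → i ∉ M.subt pp) →
      q i = lam * M.pi i ∧ ν i = 0)
    -- (T-2) fully-blocked states
    (hq2 : ∀ i ∈ Tm, (∀ pp : S, pOpt = some pp → i ∉ M.subt pp) →
      q i = lam * M.pi i ∧ ν i = lam * M.pi i)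
    -- (T-3) empty states
    (hq3 : ∀ i ∈ M.subF Om, i ∉ Tm → q i = 0 ∧ ν i = 0)
    -- (T-4) the partially-served state
    (hq4 : ∀ pp : S, pOpt = some pp → q pp = lam * M.pi pp ∧ ν pp = nuP)
    -- (T-5) partially-blocked states
    (hq5 : ∀ pp : S, pOpt = some pp → ∀ i ∈ Tm ∩ M.subt pp,
      q i = lam * M.pi i - nuP * M.pi i / M.pi pp ∧ ν i = q i)
    -- (T-6) partially-reduced states
    (hq6 : ∀ pp : S, pOpt = some pp → ∀ i ∈ M.subt pp, i ≠ pp → i ∉ M.subF Om →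
      q i = lam * M.pi i - nuP * M.pi i / M.pi pp ∧ ν i = 0)
    (Cstar : ℝ)
    (hC : IsLeast
      {v : ℝ | ∃ q' ν' : S → ℝ, M.OrigFeasible lam mu q' ν' ∧
        v = ∑ i : S, c i * (q' i - ν' i)} Cstar) :
    ∑ i : S, c i * (q i - ν i) = Cstar := by
  obtain ⟨⟨q', ν', hF', rfl⟩, hCle⟩ := hC
  subst hOm
  have hE : M.IsFluidEquilibrium lam (orderPrefix e m) Tm pOpt nuP q ν :=
    ⟨hq1, hq2, hq3, hq4, hq5, hq6⟩
  obtain ⟨hF, hsum⟩ :=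
    hE.origFeasible_and_saturated hlam0 hm hTm hserve hmax hpsome hpnone hnuPsome
  have htight : ∀ i, γstar < c i + M.Vf V γstar i → ν i = q i := fun i hi =>
    hE.nu_eq_of_mem_subF (M.mem_subF_orderPrefix_of_lt hV hc hlam0.le hγ0 hγmin horder1 hmax hi)
  have hsupp : ∀ a, ν a ≠ 0 → γstar ≤ c a + M.Vf V γstar a := fun a ha => by
    rcases hE.mem_or_eq_of_nu_ne_zero ha with hT | hp
    · exact M.le_of_position_le hV hc hlam0 hγ0 hγmin horder1 horder2 hTm hserve
        (mem_orderPrefix.1 (hTm.1 hT)).le (Or.inr hT)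
    · obtain ⟨hmc, rfl, hlt⟩ := partial_state_spec hm hpsome hpnone hserve hp
      exact M.le_of_position_le hV hc hlam0 hγ0 hγmin horder1 horder2 hTm hserve (by simp)
        (Or.inl hlt)
  have hslack : γstar * ∑ i, ν i = γstar * mu := by
    rcases hsum with h | h
    · rw [h]
    · rw [M.eq_zero_of_lt hV hc hlam0.le hγ0 hγmin h, zero_mul, zero_mul]
  refine le_antisymm ?_ (hCle ⟨q, ν, hF, rfl⟩)
  rw [M.cost_eq_of_slackness hV hF hsupp htight hslack]
  exact M.dual_le_cost hV hF' hγ0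

/-- Let `γ*` minimize `γ ↦ μ·γ − λ·V(γ, r)` over `γ ≥ 0`, and let the
priority ordering `e : Fin |S| ≃ S` list every state with `c(i) + V^f(γ*, i) > γ*`
before every state with `c(i) + V^f(γ*, i) ≤ γ*`, and every state with
`c(i) + V^f(γ*, i) = γ*` before every state with `c(i) + V^f(γ*, i) < γ*`.
Then the fluid equilibrium `(q, ν) = (q^o, ν^o)` of this ordering attains the optimal
fluid cost: `Σ_{i∈S} c(i)·(q_i − ν_i) = C*`. In particular, the equilibrium of the
OaRC priority ordering is an optimal solution of OriginalFluid. -/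
theorem fluid_equilibrium_optimal {S : Type*} [Fintype S] [DecidableEq S]
    (M : TreeMC S) (c : S → ℝ) (hc : ∀ i, 0 < c i)
    (V : ℝ → S → ℝ) (hV : M.IsSkiValue c V)
    (lam mu : ℝ) (hlam0 : 0 < lam) (hlam1 : lam < 1) (hmu0 : 0 < mu) (hmu1 : mu ≤ 1)
    (γstar : ℝ) (hγ0 : 0 ≤ γstar)
    (hγmin : ∀ γ : ℝ, 0 ≤ γ →
      mu * γstar - lam * V γstar M.r ≤ mu * γ - lam * V γ M.r)
    (e : Fin (Fintype.card S) ≃ S)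
    -- the ordering ranks states with index above `γ*` first, then those equal to `γ*`,
    -- then those below `γ*`
    (horder1 : ∀ a b : S, γstar < c a + M.Vf V γstar a →
      c b + M.Vf V γstar b ≤ γstar → e.symm a < e.symm b)
    (horder2 : ∀ a b : S, c a + M.Vf V γstar a = γstar →
      c b + M.Vf V γstar b < γstar → e.symm a < e.symm b)
    (m : ℕ) (hm : m ≤ Fintype.card S)
    (Om : Finset S)
    (hOm : Om = (Finset.univ.filter fun j : Fin (Fintype.card S) => (j : ℕ) < m).image ⇑e)
    (Tm : Finset S) (hTm : M.IsTopSet Om Tm)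
    (hserve : lam * ∑ i ∈ Tm, M.pi i ≤ mu)
    (hmax : ∀ m' : ℕ, m < m' → m' ≤ Fintype.card S → ∀ T' : Finset S,
      M.IsTopSet
        ((Finset.univ.filter fun j : Fin (Fintype.card S) => (j : ℕ) < m').image ⇑e) T' →
      mu < lam * ∑ i ∈ T', M.pi i)
    (pOpt : Option S)
    (hpsome : ∀ h : m < Fintype.card S,
      lam * ∑ i ∈ Tm, M.pi i < mu → pOpt = some (e ⟨m, h⟩))
    (hpnone : (m = Fintype.card S ∨ lam * ∑ i ∈ Tm, M.pi i = mu) → pOpt = none)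
    (nuP : ℝ)
    (hnuPnone : pOpt = none → nuP = 0)
    (hnuPsome : ∀ pp : S, pOpt = some pp →
      nuP = (mu - lam * ∑ i ∈ Tm, M.pi i) /
        (1 - (∑ i ∈ Tm ∩ M.subt pp, M.pi i) / M.pi pp))
    (q ν : S → ℝ)
    -- (T-1) un-reduced states
    (hq1 : ∀ i : S, i ∉ M.subF Om → (∀ pp : S, pOpt = some pp → i ∉ M.subt pp) →
      q i = lam * M.pi i ∧ ν i = 0)
    -- (T-2) fully-blocked states
    (hq2 : ∀ i ∈ Tm, (∀ pp : S, pOpt = some pp → i ∉ M.subt pp) →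
      q i = lam * M.pi i ∧ ν i = lam * M.pi i)
    -- (T-3) empty states
    (hq3 : ∀ i ∈ M.subF Om, i ∉ Tm → q i = 0 ∧ ν i = 0)
    -- (T-4) the partially-served state
    (hq4 : ∀ pp : S, pOpt = some pp → q pp = lam * M.pi pp ∧ ν pp = nuP)
    -- (T-5) partially-blocked states
    (hq5 : ∀ pp : S, pOpt = some pp → ∀ i ∈ Tm ∩ M.subt pp,
      q i = lam * M.pi i - nuP * M.pi i / M.pi pp ∧ ν i = q i)
    -- (T-6) partially-reduced states
    (hq6 : ∀ pp : S, pOpt = some pp → ∀ i ∈ M.subt pp, i ≠ pp → i ∉ M.subF Om →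
      q i = lam * M.pi i - nuP * M.pi i / M.pi pp ∧ ν i = 0)
    (Cstar : ℝ)
    (hC : IsLeast
      {v : ℝ | ∃ q' ν' : S → ℝ, M.OrigFeasible lam mu q' ν' ∧
        v = ∑ i : S, c i * (q' i - ν' i)} Cstar) :
    ∑ i : S, c i * (q i - ν i) = Cstar :=
  fluid_equilibrium_optimal_general M c hc V hV lam mu hlam0 γstar hγ0 hγmin e horder1 horder2 m hm
    Om hOm Tm hTm hserve hmax pOpt hpsome hpnone nuP hnuPsome q ν hq1 hq2 hq3 hq4 hq5 hq6 Cstar hC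
end

section
/- Suppose Φ : 𝒳 → ℝ_{≥0} is measurable with ∫ Φ dμ < ∞, G ⊆ 𝒳 is a measurable set with μ(𝒳 \ G) ≤ ε, and ε, B, Δ, v_whp, v_max are constants with ε ≥ 0, B ≥ 0, 0 ≤ Δ ≤ v_whp, 0 < v_whp ≤ v_max, such that: (i) for every x ∈ G, P(x, {y : Φ(y) − Φ(x) ≥ v_whp}) ≤ ε; (ii) for every x ∈ G with Φ(x) ≥ B, P(x, {y : Φ(y) − Φ(x) ≥ −Δ}) ≤ ε; (iii) for every x ∈ 𝒳, P(x, {y : Φ(y) − Φ(x) > v_max}) = 0. Then for every real a ≥ B − v_whp, μ{x : Φ(x) > a + v_whp} ≤ (v_whp/(v_whp + Δ))·μ{x : Φ(x) > a − v_whp} + 6·ε·v_max/v_whp. -/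
open MeasureTheory ProbabilityTheory
open scoped ENNReal

/-!
The test function `g = (Φ - a)⁺` is `μ`-integrable, so stationarity lets one cancel `∫ g dμ`
against `∫ Pg dμ`. Pointwise, one step of the chain lowers `g` by `Δ` on `G ∩ {Φ > a + v}`
and raises it by at most `v` on the slab `{a - v < Φ ≤ a + v}`, up to an error `O(ε·vmax)`
on `G` and `vmax` off `G`. Integrating gives `Δ·μ{Φ > a + v} ≤ v·μ(slab) + O(ε·vmax)`, which
rearranges to the geometric bound because `{Φ > a - v}` is `{Φ > a + v}` plus the slab.
-/
theorem ProbabilityTheory.Kernel.Invariant.lintegral_le_of_drift {X : Type*} [MeasurableSpace X]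
    {P : Kernel X X} {μ : Measure X} (hinv : P.Invariant μ) {g u w : X → ℝ≥0∞}
    (hg : Measurable g) (hg_fin : ∫⁻ x, g x ∂μ ≠ ∞)
    (hdrift : ∀ x, ∫⁻ y, g y ∂(P x) + u x ≤ g x + w x) :
    ∫⁻ x, u x ∂μ ≤ ∫⁻ x, w x ∂μ := by
  refine (ENNReal.add_le_add_iff_left hg_fin).1 ?_
  calc ∫⁻ x, g x ∂μ + ∫⁻ x, u x ∂μ
      ≤ ∫⁻ x, ∫⁻ y, g y ∂(P x) ∂μ + ∫⁻ x, u x ∂μ := by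
        refine add_le_add_left ?_ _
        conv_lhs => rw [← hinv.def]
        exact Measure.lintegral_bind_le _ _ _
    _ ≤ ∫⁻ x, (∫⁻ y, g y ∂(P x) + u x) ∂μ := le_lintegral_add _ _
    _ ≤ ∫⁻ x, (g x + w x) ∂μ := lintegral_mono hdrift
    _ = ∫⁻ x, g x ∂μ + ∫⁻ x, w x ∂μ := lintegral_add_left hg _

theorem MeasureTheory.lintegral_ofReal_le_of_le_of_notMem {X : Type*} [MeasurableSpace X]
    {ν : Measure X} [IsProbabilityMeasure ν] {f : X → ℝ} {U : Set X} (hU : MeasurableSet U)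
    {c d : ℝ} (h_off : ∀ y ∉ U, f y ≤ c) (h_ae : ∀ᵐ y ∂ν, f y ≤ c + d) :
    ∫⁻ y, ENNReal.ofReal (f y) ∂ν ≤ ENNReal.ofReal c + ENNReal.ofReal d * ν U := by
  calc ∫⁻ y, ENNReal.ofReal (f y) ∂ν
      ≤ ∫⁻ y, (ENNReal.ofReal c + U.indicator (fun _ ↦ ENNReal.ofReal d) y) ∂ν := by
        refine lintegral_mono_ae (h_ae.mono fun y hy ↦ ?_)
        by_cases hyU : y ∈ U
        · rw [Set.indicator_of_mem hyU]
          exact (ENNReal.ofReal_le_ofReal hy).trans ENNReal.ofReal_add_le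
        · rw [Set.indicator_of_notMem hyU, add_zero]
          exact ENNReal.ofReal_le_ofReal (h_off y hyU)
    _ = ENNReal.ofReal c + ENNReal.ofReal d * ν U := by
        rw [lintegral_add_left measurable_const, lintegral_const, measure_univ, mul_one,
          lintegral_indicator_const hU]

theorem lintegral_ofReal_sub_add_indicator_le {X : Type*} [MeasurableSpace X]
    (P : Kernel X X) [IsMarkovKernel P] {Φ : X → ℝ} (hΦ : Measurable Φ) {G : Set X}
    {ε B Δ v vmax a : ℝ} (hΔ0 : 0 ≤ Δ) (hΔv : Δ ≤ v)
    (h1 : ∀ x ∈ G, P x {y | v ≤ Φ y - Φ x} ≤ ENNReal.ofReal ε)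
    (h2 : ∀ x ∈ G, B ≤ Φ x → P x {y | -Δ ≤ Φ y - Φ x} ≤ ENNReal.ofReal ε)
    (h3 : ∀ x, P x {y | vmax < Φ y - Φ x} = 0) (ha : B - v ≤ a) (x : X) :
    ∫⁻ y, ENNReal.ofReal (Φ y - a) ∂(P x)
        + (G ∩ {x | a + v < Φ x}).indicator (fun _ ↦ ENNReal.ofReal Δ) x ≤
      ENNReal.ofReal (Φ x - a)
        + ({x | a - v < Φ x} \ {x | a + v < Φ x}).indicator (fun _ ↦ ENNReal.ofReal v) x
        + Gᶜ.indicator (fun _ ↦ ENNReal.ofReal vmax) x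
        + ENNReal.ofReal (Δ + vmax) * ENNReal.ofReal ε := by
  have h_max : ∀ᵐ y ∂(P x), Φ y - a ≤ Φ x - a + vmax := by
    filter_upwards [measure_eq_zero_iff_ae_notMem.1 (h3 x)] with y hy
    simp only [not_lt] at hy
    linarith
  have h_incr : ∀ c : ℝ, MeasurableSet {y | c ≤ Φ y - Φ x} := fun c ↦
    measurableSet_le measurable_const (hΦ.sub measurable_const)
  by_cases hxG : x ∈ G
  swap
  · have h_int := lintegral_ofReal_le_of_le_of_notMem (f := fun y ↦ Φ y - a)
      MeasurableSet.univ (fun y hy ↦ absurd (Set.mem_univ y) hy) h_max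
    rw [measure_univ, mul_one] at h_int
    rw [Set.indicator_of_notMem (fun h ↦ hxG h.1), add_zero,
      Set.indicator_of_mem (Set.mem_compl hxG)]
    exact h_int.trans ((add_le_add le_self_add le_rfl).trans le_self_add)
  rw [Set.indicator_of_notMem (Set.notMem_compl_iff.2 hxG), add_zero]
  by_cases hxA : a + v < Φ x
  · have h_int := lintegral_ofReal_le_of_le_of_notMem (f := fun y ↦ Φ y - a) (h_incr (-Δ))
      (c := Φ x - a - Δ) (d := Δ + vmax)
      (fun y hy ↦ by simp only [Set.mem_ofPred_eq, not_le] at hy; linarith)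
      (h_max.mono fun y hy ↦ by linarith)
    rw [Set.indicator_of_mem (Set.mem_inter hxG hxA), Set.indicator_of_notMem (fun h ↦ h.2 hxA),
      add_zero]
    calc ∫⁻ y, ENNReal.ofReal (Φ y - a) ∂(P x) + ENNReal.ofReal Δ
        ≤ ENNReal.ofReal (Φ x - a - Δ) + ENNReal.ofReal (Δ + vmax) * ENNReal.ofReal ε
          + ENNReal.ofReal Δ := by
          grw [h_int, h2 x hxG (by linarith)]
      _ = ENNReal.ofReal (Φ x - a) + ENNReal.ofReal (Δ + vmax) * ENNReal.ofReal ε := by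
          rw [add_right_comm, ← ENNReal.ofReal_add (by linarith) hΔ0, sub_add_cancel]
  · have h_int := lintegral_ofReal_le_of_le_of_notMem (f := fun y ↦ Φ y - a) (h_incr v)
      (c := Φ x - a + v) (d := vmax)
      (fun y hy ↦ by simp only [Set.mem_ofPred_eq, not_le] at hy; linarith)
      (h_max.mono fun y hy ↦ by linarith)
    have h_slab : ENNReal.ofReal (Φ x - a + v) ≤ ENNReal.ofReal (Φ x - a)
        + ({x | a - v < Φ x} \ {x | a + v < Φ x}).indicator (fun _ ↦ ENNReal.ofReal v) x := by
      by_cases hxC : a - v < Φ x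
      · rw [Set.indicator_of_mem (show x ∈ {x | a - v < Φ x} \ {x | a + v < Φ x} from ⟨hxC, hxA⟩)]
        exact ENNReal.ofReal_add_le
      · rw [ENNReal.ofReal_of_nonpos (by linarith [not_lt.1 hxC])]
        exact bot_le
    rw [Set.indicator_of_notMem (fun h ↦ hxA h.2), add_zero]
    grw [h_int, h_slab, h1 x hxG]
    gcongr
    linarith

theorem le_div_mul_add_div_of_mul_le {α σ Δ v e : ℝ} (hΔ : 0 ≤ Δ) (hv : 0 < v) (he : 0 ≤ e)
    (h : Δ * α ≤ v * σ + e) : α ≤ v / (v + Δ) * (α + σ) + e / v := by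
  have hvΔ : 0 < v + Δ := by linarith
  calc α ≤ v / (v + Δ) * (α + σ) + e / (v + Δ) := by
        rw [div_mul_eq_mul_div, ← add_div, le_div_iff₀ hvΔ]
        linarith
    _ ≤ v / (v + Δ) * (α + σ) + e / v := by
        gcongr
        linarith

theorem ENNReal.le_ofReal_div_mul_add_of_mul_le {α σ : ℝ≥0∞} (hα : α ≠ ∞) (hσ : σ ≠ ∞)
    {Δ v e : ℝ} (hΔ : 0 ≤ Δ) (hv : 0 < v) (he : 0 ≤ e)
    (h : ENNReal.ofReal Δ * α ≤ ENNReal.ofReal v * σ + ENNReal.ofReal e) :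
    α ≤ ENNReal.ofReal (v / (v + Δ)) * (α + σ) + ENNReal.ofReal (e / v) := by
  rw [← ENNReal.ofReal_toReal hα, ← ENNReal.ofReal_toReal hσ] at h ⊢
  rw [← ENNReal.ofReal_mul hΔ, ← ENNReal.ofReal_mul hv.le, ← ENNReal.ofReal_add (by positivity) he,
    ENNReal.ofReal_le_ofReal_iff (by positivity)] at h
  rw [← ENNReal.ofReal_add toReal_nonneg toReal_nonneg, ← ENNReal.ofReal_mul (by positivity),
    ← ENNReal.ofReal_add (by positivity) (by positivity)]
  exact ENNReal.ofReal_le_ofReal (le_div_mul_add_div_of_mul_le hΔ hv he h)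

theorem ofReal_mul_measure_inter_le_of_invariant {X : Type*} [MeasurableSpace X]
    {P : Kernel X X} [IsMarkovKernel P] {μ : Measure X} [IsProbabilityMeasure μ]
    (hinv : P.Invariant μ) {Φ : X → ℝ} (hΦ : Measurable Φ) (hΦint : Integrable Φ μ)
    {G : Set X} (hG : MeasurableSet G)
    {ε B Δ v vmax a : ℝ} (hΔ0 : 0 ≤ Δ) (hΔv : Δ ≤ v)
    (h1 : ∀ x ∈ G, P x {y | v ≤ Φ y - Φ x} ≤ ENNReal.ofReal ε)
    (h2 : ∀ x ∈ G, B ≤ Φ x → P x {y | -Δ ≤ Φ y - Φ x} ≤ ENNReal.ofReal ε)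
    (h3 : ∀ x, P x {y | vmax < Φ y - Φ x} = 0) (ha : B - v ≤ a) :
    ENNReal.ofReal Δ * μ (G ∩ {x | a + v < Φ x}) ≤
      ENNReal.ofReal v * μ ({x | a - v < Φ x} \ {x | a + v < Φ x})
        + (ENNReal.ofReal vmax * μ Gᶜ + ENNReal.ofReal (Δ + vmax) * ENNReal.ofReal ε) := by
  have hA : MeasurableSet {x | a + v < Φ x} := measurableSet_lt measurable_const hΦ
  have hC : MeasurableSet {x | a - v < Φ x} := measurableSet_lt measurable_const hΦ
  have h := hinv.lintegral_le_of_drift (g := fun x ↦ ENNReal.ofReal (Φ x - a))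
    (hΦ.sub_const a).ennreal_ofReal
    (hΦint.sub (integrable_const a)).lintegral_lt_top.ne
    fun x ↦ (lintegral_ofReal_sub_add_indicator_le P hΦ hΔ0 hΔv h1 h2 h3 ha x).trans_eq
      (by rw [add_assoc, add_assoc])
  rwa [lintegral_add_left (measurable_const.indicator (hC.diff hA)),
    lintegral_add_right _ measurable_const, lintegral_const, measure_univ, mul_one,
    lintegral_indicator_const (hG.inter hA), lintegral_indicator_const (hC.diff hA),
    lintegral_indicator_const hG.compl] at h

theorem ofReal_mul_measure_le_of_invariant {X : Type*} [MeasurableSpace X]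
    {P : Kernel X X} [IsMarkovKernel P] {μ : Measure X} [IsProbabilityMeasure μ]
    (hinv : P.Invariant μ) {Φ : X → ℝ} (hΦ : Measurable Φ) (hΦint : Integrable Φ μ)
    {G : Set X} (hG : MeasurableSet G)
    {ε B Δ v vmax a : ℝ} (hε : 0 ≤ ε) (hΔ0 : 0 ≤ Δ) (hΔv : Δ ≤ v) (hvmax : v ≤ vmax)
    (hGc : μ Gᶜ ≤ ENNReal.ofReal ε)
    (h1 : ∀ x ∈ G, P x {y | v ≤ Φ y - Φ x} ≤ ENNReal.ofReal ε)
    (h2 : ∀ x ∈ G, B ≤ Φ x → P x {y | -Δ ≤ Φ y - Φ x} ≤ ENNReal.ofReal ε)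
    (h3 : ∀ x, P x {y | vmax < Φ y - Φ x} = 0) (ha : B - v ≤ a) :
    ENNReal.ofReal Δ * μ {x | a + v < Φ x} ≤
      ENNReal.ofReal v * μ ({x | a - v < Φ x} \ {x | a + v < Φ x})
        + ENNReal.ofReal (6 * ε * vmax) := by
  set A := {x | a + v < Φ x}
  have hvmax0 : 0 ≤ vmax := hΔ0.trans (hΔv.trans hvmax)
  have h_err : ENNReal.ofReal vmax * ENNReal.ofReal ε
      + ENNReal.ofReal (Δ + vmax) * ENNReal.ofReal ε + ENNReal.ofReal Δ * ENNReal.ofReal ε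
      ≤ ENNReal.ofReal (6 * ε * vmax) := by
    rw [← ENNReal.ofReal_mul hvmax0, ← ENNReal.ofReal_mul (by positivity),
      ← ENNReal.ofReal_mul hΔ0, ← ENNReal.ofReal_add (by positivity) (by positivity),
      ← ENNReal.ofReal_add (by positivity) (by positivity)]
    exact ENNReal.ofReal_le_ofReal (by nlinarith)
  calc ENNReal.ofReal Δ * μ A ≤ ENNReal.ofReal Δ * μ (G ∩ A) + ENNReal.ofReal Δ * μ Gᶜ := by
        rw [← mul_add, Set.inter_comm]
        gcongr
        exact (measure_le_inter_add_sdiff μ A G).trans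
          (by gcongr; exact Set.sdiff_subset_compl _ _)
    _ ≤ ENNReal.ofReal v * μ ({x | a - v < Φ x} \ A)
          + (ENNReal.ofReal vmax * ENNReal.ofReal ε
            + ENNReal.ofReal (Δ + vmax) * ENNReal.ofReal ε)
          + ENNReal.ofReal Δ * ENNReal.ofReal ε := by
        grw [ofReal_mul_measure_inter_le_of_invariant hinv hΦ hΦint hG hΔ0 hΔv h1 h2 h3 ha, hGc]
    _ ≤ _ := by
        rw [add_assoc]
        gcongr

theorem lyapunov_geometric_tail_step_general
    {𝒳 : Type*} [MeasurableSpace 𝒳]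
    (P : Kernel 𝒳 𝒳) [IsMarkovKernel P]
    (μ : Measure 𝒳) [IsProbabilityMeasure μ]
    (hinv : Kernel.Invariant P μ)
    (Φ : 𝒳 → ℝ) (hΦmeas : Measurable Φ)
    (hΦint : Integrable Φ μ)
    (G : Set 𝒳) (hG : MeasurableSet G)
    (ε B Δ vwhp vmax : ℝ)
    (hε : 0 ≤ ε) (hΔ0 : 0 ≤ Δ) (hΔv : Δ ≤ vwhp)
    (hv0 : 0 < vwhp) (hvmax : vwhp ≤ vmax)
    (hGc : μ Gᶜ ≤ ENNReal.ofReal ε)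
    (h1 : ∀ x ∈ G, P x {y | vwhp ≤ Φ y - Φ x} ≤ ENNReal.ofReal ε)
    (h2 : ∀ x ∈ G, B ≤ Φ x → P x {y | -Δ ≤ Φ y - Φ x} ≤ ENNReal.ofReal ε)
    (h3 : ∀ x, P x {y | vmax < Φ y - Φ x} = 0)
    (a : ℝ) (ha : B - vwhp ≤ a) :
    μ {x | a + vwhp < Φ x} ≤
      ENNReal.ofReal (vwhp / (vwhp + Δ)) * μ {x | a - vwhp < Φ x} +
        ENNReal.ofReal (6 * ε * vmax / vwhp) := by
  have hAC : {x | a + vwhp < Φ x} ⊆ {x | a - vwhp < Φ x} :=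
    fun x (hx : a + vwhp < Φ x) ↦ show a - vwhp < Φ x by linarith
  rw [← measure_sdiff_add_inter {x | a - vwhp < Φ x} (measurableSet_lt measurable_const hΦmeas),
    Set.inter_eq_right.2 hAC, add_comm (μ (_ \ _))]
  exact ENNReal.le_ofReal_div_mul_add_of_mul_le (measure_ne_top μ _) (measure_ne_top μ _) hΔ0 hv0
    (by have := hv0.le.trans hvmax; positivity)
    (ofReal_mul_measure_le_of_invariant hinv hΦmeas hΦint hG hε hΔ0 hΔv hvmax hGc h1 h2 h3 ha)

/-- the one-step geometric tail bound for a Lyapunov function `Φ` with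
respect to a Markov transition kernel `P` and a stationary probability measure `μ`:
if `Φ` has, from any state in a high-probability set `G`, increments below `v_whp`
with probability `≥ 1 − ε`, negative drift `−Δ` with probability `≥ 1 − ε` whenever
`Φ ≥ B`, and almost-sure increments at most `v_max`, then for every `a ≥ B − v_whp`,
`μ{Φ > a + v_whp} ≤ (v_whp/(v_whp+Δ))·μ{Φ > a − v_whp} + 6·ε·v_max/v_whp`. -/
theorem lyapunov_geometric_tail_step
    {𝒳 : Type*} [MeasurableSpace 𝒳]
    (P : Kernel 𝒳 𝒳) [IsMarkovKernel P]
    (μ : Measure 𝒳) [IsProbabilityMeasure μ]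
    (hinv : Kernel.Invariant P μ)
    (Φ : 𝒳 → ℝ) (hΦmeas : Measurable Φ) (hΦnonneg : ∀ x, 0 ≤ Φ x)
    (hΦint : Integrable Φ μ)
    (G : Set 𝒳) (hG : MeasurableSet G)
    (ε B Δ vwhp vmax : ℝ)
    (hε : 0 ≤ ε) (hB : 0 ≤ B) (hΔ0 : 0 ≤ Δ) (hΔv : Δ ≤ vwhp)
    (hv0 : 0 < vwhp) (hvmax : vwhp ≤ vmax)
    (hGc : μ Gᶜ ≤ ENNReal.ofReal ε)
    (h1 : ∀ x ∈ G, P x {y | vwhp ≤ Φ y - Φ x} ≤ ENNReal.ofReal ε)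
    (h2 : ∀ x ∈ G, B ≤ Φ x → P x {y | -Δ ≤ Φ y - Φ x} ≤ ENNReal.ofReal ε)
    (h3 : ∀ x, P x {y | vmax < Φ y - Φ x} = 0)
    (a : ℝ) (ha : B - vwhp ≤ a) :
    μ {x | a + vwhp < Φ x} ≤
      ENNReal.ofReal (vwhp / (vwhp + Δ)) * μ {x | a - vwhp < Φ x} +
        ENNReal.ofReal (6 * ε * vmax / vwhp) :=
  lyapunov_geometric_tail_step_general P μ hinv Φ hΦmeas hΦint G hG ε B Δ vwhp vmax hε hΔ0 hΔv hv0
    hvmax hGc h1 h2 h3 a ha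
end

section
/- Let Z_1, …, Z_n be nonnegative integer-valued random variables with Σ_{i=1}^n Z_i ≤ M almost surely, where M is a positive integer, and suppose that conditionally on (Z_1, …, Z_n), the random variables F_1, …, F_n are independent with F_i distributed Binomial(Z_i, θ_i), where each θ_i ≥ θ for a fixed θ ∈ (0,1]. Then for every δ ∈ (0, e^{−1}], Pr{ Σ_{i=1}^n F_i ≥ θ·Σ_{i=1}^n Z_i − √(M·ln(1/δ)) } ≥ 1 − δ². -/
/-!
Conditionally on `Z = z`, the sum `∑ F_i` is a sum of `∑ z_i ≤ M` independent Bernoulli variables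
with success probabilities at least `θ`. Hoeffding's lemma `1 - p + p e^x ≤ e^(p x + x² / 8)` and
the binomial theorem bound its exponential moments, and the Chernoff bound with parameter
`4 t / M`, where `t = √(M ln (1 / δ))`, makes the conditional probability of
`∑ F_i < θ ∑ z_i - t` at most `exp (-2 t² / M) = δ²`. Averaging over the values `z` of `Z` gives
the theorem.
-/

open MeasureTheory ProbabilityTheory Real Finset

lemma measure_le_of_forall_cond_preimage_le {Ω α : Type*} [MeasurableSpace Ω]
    [MeasurableSpace α] [Countable α] [MeasurableSingletonClass α]
    {μ : Measure Ω} [IsProbabilityMeasure μ] {X : Ω → α} (hX : Measurable X) {A : Set Ω}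
    {ε : ENNReal} (h : ∀ x, μ (X ⁻¹' {x}) ≠ 0 → μ[A | X ⁻¹' {x}] ≤ ε) : μ A ≤ ε := by
  have hfiber (x : α) : μ (X ⁻¹' {x} ∩ A) ≤ ε * μ (X ⁻¹' {x}) := by
    rw [← cond_mul_eq_inter (hX (measurableSet_singleton x))]
    by_cases hx : μ (X ⁻¹' {x}) = 0
    · simp [hx]
    · exact mul_le_mul_left (h x hx) _
  calc μ A ≤ ∑' x, μ (X ⁻¹' {x} ∩ A) :=
        (measure_mono fun ω hω => Set.mem_iUnion.2 ⟨X ω, rfl, hω⟩ :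
          μ A ≤ μ (⋃ x, X ⁻¹' {x} ∩ A)).trans (measure_iUnion_le _)
    _ ≤ ∑' x, ε * μ (X ⁻¹' {x}) := ENNReal.tsum_le_tsum hfiber
    _ = ε := by
        rw [ENNReal.tsum_mul_left, ← measure_iUnion (pairwise_disjoint_fiber X)
          fun x => hX (measurableSet_singleton x), ← Set.preimage_iUnion, Set.iUnion_of_singleton,
          Set.preimage_univ, measure_univ, mul_one]

lemma cond_le_cond_of_inter_subset {Ω : Type*} [MeasurableSpace Ω] {μ : Measure Ω}
    {s A B : Set Ω} (hs : MeasurableSet s) (h : s ∩ A ⊆ B) : μ[A | s] ≤ μ[B | s] := by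
  rw [← cond_inter_self hs A]
  exact measure_mono h

lemma ofReal_one_sub_le_of_measure_compl_le {Ω : Type*} [MeasurableSpace Ω] {μ : Measure Ω}
    [IsProbabilityMeasure μ] {A : Set Ω} {ε : ℝ} (hε : 0 ≤ ε) (h : μ Aᶜ ≤ ENNReal.ofReal ε) :
    ENNReal.ofReal (1 - ε) ≤ μ A := by
  rw [ENNReal.ofReal_sub _ hε, ENNReal.ofReal_one, tsub_le_iff_right, ← measure_univ (μ := μ),
    ← Set.union_compl_self A]
  exact (measure_union_le A Aᶜ).trans (by gcongr)

/- Hoeffding's lemma for the two-point law `(1 - p) δ₀ + p δ₁`, whose centred moment generating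
function is `exp (-p x) (1 - p + p exp x)`. -/
lemma one_sub_add_mul_exp_le {p : ℝ} (hp0 : 0 ≤ p) (hp1 : p ≤ 1) (x : ℝ) :
    1 - p + p * exp x ≤ exp (p * x + x ^ 2 / 8) := by
  let ν : Measure ℝ :=
    ENNReal.ofReal (1 - p) • Measure.dirac 0 + ENNReal.ofReal p • Measure.dirac 1
  have : IsProbabilityMeasure ν := ⟨by
    simp [ν, ← ENNReal.ofReal_add (sub_nonneg.2 hp1) hp0]⟩
  have hint (f : ℝ → ℝ) : ∫ y, f y ∂ν = (1 - p) * f 0 + p * f 1 := by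
    rw [integral_add_measure ((integrable_dirac (by simp)).smul_measure (by simp))
      ((integrable_dirac (by simp)).smul_measure (by simp))]
    simp [hp0, sub_nonneg.2 hp1]
  have hsupp : ∀ᵐ y ∂ν, y ∈ Set.Icc (0 : ℝ) 1 := by
    simp only [ν, ae_add_measure_iff]
    exact ⟨Measure.ae_smul_measure (by simp) _, Measure.ae_smul_measure (by simp) _⟩
  have hmgf : (1 - p) * exp (-(x * p)) + p * exp (x * (1 - p)) ≤ exp (x ^ 2 / 8) := by
    have h := (hasSubgaussianMGF_of_mem_Icc aemeasurable_id hsupp).mgf_le x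
    rw [mgf, hint, hint id] at h
    norm_num at h
    rwa [show 1 / 4 * x ^ 2 / 2 = x ^ 2 / 8 by ring] at h
  calc 1 - p + p * exp x
      = exp (p * x) * ((1 - p) * exp (-(x * p)) + p * exp (x * (1 - p))) := by
        rw [mul_add, mul_left_comm, ← exp_add, mul_left_comm _ p, ← exp_add,
          show p * x + -(x * p) = 0 by ring, show p * x + x * (1 - p) = x by ring, exp_zero]
        ring
    _ ≤ exp (p * x) * exp (x ^ 2 / 8) := by gcongr
    _ = exp (p * x + x ^ 2 / 8) := (exp_add _ _).symm

section Binomial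

variable {ι : Type*} [Fintype ι]

def prodBinomialPMF (z : ι → ℕ) (p : ι → ℝ) (f : ι → ℕ) : ℝ :=
  ∏ i, ((z i).choose (f i) : ℝ) * p i ^ (f i) * (1 - p i) ^ (z i - f i)

lemma prodBinomialPMF_nonneg {z : ι → ℕ} {p : ι → ℝ} (hp0 : ∀ i, 0 ≤ p i) (hp1 : ∀ i, p i ≤ 1)
    (f : ι → ℕ) : 0 ≤ prodBinomialPMF z p f :=
  prod_nonneg fun i _ => mul_nonneg (mul_nonneg (Nat.cast_nonneg _) (pow_nonneg (hp0 i) _))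
    (pow_nonneg (sub_nonneg.2 (hp1 i)) _)

lemma prodBinomialPMF_eq_zero_of_notMem [DecidableEq ι] {z : ι → ℕ} (p : ι → ℝ) {f : ι → ℕ}
    (hf : f ∉ Fintype.piFinset fun i => range (z i + 1)) : prodBinomialPMF z p f = 0 := by
  obtain ⟨i, hi⟩ : ∃ i, z i < f i := by simpa [Fintype.mem_piFinset, Nat.lt_succ_iff] using hf
  exact prod_eq_zero (mem_univ i) (by simp [Nat.choose_eq_zero_of_lt hi])

lemma sum_prodBinomialPMF_mul_exp [DecidableEq ι] (z : ι → ℕ) (p : ι → ℝ) (s : ℝ) :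
    ∑ f ∈ Fintype.piFinset (fun i => range (z i + 1)),
        prodBinomialPMF z p f * exp (s * ∑ i, (f i : ℝ)) =
      ∏ i, (1 - p i + p i * exp s) ^ z i := by
  have hfactor (f : ι → ℕ) : prodBinomialPMF z p f * exp (s * ∑ i, (f i : ℝ)) =
      ∏ i, ((z i).choose (f i) : ℝ) * (p i * exp s) ^ (f i) * (1 - p i) ^ (z i - f i) := by
    rw [prodBinomialPMF, mul_sum, exp_sum, ← prod_mul_distrib]
    refine prod_congr rfl fun i _ => ?_
    rw [mul_comm s, exp_nat_mul, mul_pow]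
    ring
  rw [sum_congr rfl fun f _ => hfactor f, ← prod_univ_sum (fun i => range (z i + 1))
    fun i k => ((z i).choose k : ℝ) * (p i * exp s) ^ k * (1 - p i) ^ (z i - k)]
  refine prod_congr rfl fun i _ => ?_
  rw [add_comm (1 - _), add_pow]
  exact sum_congr rfl fun k _ => by ring

lemma sum_prodBinomialPMF_mul_exp_le [DecidableEq ι] {z : ι → ℕ} {p : ι → ℝ}
    (hp0 : ∀ i, 0 ≤ p i) (hp1 : ∀ i, p i ≤ 1) (s : ℝ) :
    ∑ f ∈ Fintype.piFinset (fun i => range (z i + 1)),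
        prodBinomialPMF z p f * exp (s * ∑ i, (f i : ℝ)) ≤
      exp (∑ i, z i * (p i * s + s ^ 2 / 8)) := by
  rw [sum_prodBinomialPMF_mul_exp, exp_sum]
  refine prod_le_prod (fun i _ => pow_nonneg ?_ _) fun i _ => ?_
  · nlinarith [exp_pos s, hp0 i, hp1 i]
  · rw [exp_nat_mul]
    exact pow_le_pow_left₀ (by nlinarith [exp_pos s, hp0 i, hp1 i])
      (one_sub_add_mul_exp_le (hp0 i) (hp1 i) s) _

lemma tsum_prodBinomialPMF_sum_lt_le {z : ι → ℕ} {p : ι → ℝ}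
    (hp0 : ∀ i, 0 ≤ p i) (hp1 : ∀ i, p i ≤ 1) (c : ℝ) {s : ℝ} (hs : 0 ≤ s) :
    ∑' f : {f : ι → ℕ | ∑ i, (f i : ℝ) < c}, ENNReal.ofReal (prodBinomialPMF z p f) ≤
      ENNReal.ofReal (exp (s * c - ∑ i, z i * (p i * s - s ^ 2 / 8))) := by
  classical
  set D := Fintype.piFinset fun i => range (z i + 1)
  let g f := prodBinomialPMF z p f * exp (s * (c - ∑ i, (f i : ℝ)))
  have hg_nonneg f : 0 ≤ g f := mul_nonneg (prodBinomialPMF_nonneg hp0 hp1 f) (exp_pos _).le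
  have hg_support : ∀ f ∉ D, ENNReal.ofReal (g f) = 0 := fun f hf => by
    simp only [g, prodBinomialPMF_eq_zero_of_notMem p hf, zero_mul, ENNReal.ofReal_zero]
  have hg_sum : ∑ f ∈ D, g f ≤ exp (s * c - ∑ i, z i * (p i * s - s ^ 2 / 8)) :=
    calc ∑ f ∈ D, g f
        = exp (s * c) * ∑ f ∈ D, prodBinomialPMF z p f * exp (-s * ∑ i, (f i : ℝ)) := by
          rw [mul_sum]
          refine sum_congr rfl fun f _ => ?_
          rw [mul_left_comm, ← exp_add]
          simp only [g]
          ring_nf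
      _ ≤ exp (s * c) * exp (∑ i, z i * (p i * -s + (-s) ^ 2 / 8)) := by
          gcongr
          exact sum_prodBinomialPMF_mul_exp_le hp0 hp1 (-s)
      _ = exp (s * c - ∑ i, z i * (p i * s - s ^ 2 / 8)) := by
          rw [← exp_add, sub_eq_add_neg, ← sum_neg_distrib]
          congr 2
          exact sum_congr rfl fun i _ => by ring
  calc _ ≤ ∑' f : {f : ι → ℕ | ∑ i, (f i : ℝ) < c}, ENNReal.ofReal (g f) :=
        ENNReal.tsum_le_tsum fun f => ENNReal.ofReal_le_ofReal <|
          le_mul_of_one_le_right (prodBinomialPMF_nonneg hp0 hp1 f)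
            (one_le_exp (mul_nonneg hs (sub_nonneg.2 f.2.le)))
    _ ≤ ∑' f, ENNReal.ofReal (g f) :=
        ENNReal.tsum_comp_le_tsum_of_injective Subtype.val_injective _
    _ = ENNReal.ofReal (∑ f ∈ D, g f) := by
        rw [tsum_eq_sum hg_support, ENNReal.ofReal_sum_of_nonneg fun f _ => hg_nonneg f]
    _ ≤ _ := ENNReal.ofReal_le_ofReal hg_sum

lemma measure_sum_lt_le_of_prodBinomialPMF {Ω : Type*} [MeasurableSpace Ω] (ν : Measure Ω)
    {F : ι → Ω → ℕ} (hF : ∀ i, Measurable (F i)) {z : ι → ℕ} {p : ι → ℝ}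
    (hp0 : ∀ i, 0 ≤ p i) (hp1 : ∀ i, p i ≤ 1)
    (hlaw : ∀ f : ι → ℕ, ν {ω | ∀ i, F i ω = f i} = ENNReal.ofReal (prodBinomialPMF z p f))
    (c : ℝ) {s : ℝ} (hs : 0 ≤ s) :
    ν {ω | ∑ i, (F i ω : ℝ) < c} ≤
      ENNReal.ofReal (exp (s * c - ∑ i, z i * (p i * s - s ^ 2 / 8))) := by
  have hfiber (f : ι → ℕ) : {ω | ∀ i, F i ω = f i} = (fun ω i => F i ω) ⁻¹' {f} :=
    Set.ext fun ω => funext_iff.symm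
  calc ν {ω | ∑ i, (F i ω : ℝ) < c}
      = ∑' f : {f : ι → ℕ | ∑ i, (f i : ℝ) < c}, ν ((fun ω i => F i ω) ⁻¹' {f.1}) :=
        (tsum_measure_preimage_singleton (μ := ν) (s := {f : ι → ℕ | ∑ i, (f i : ℝ) < c})
          (Set.to_countable _) fun f _ =>
          measurable_pi_lambda _ hF (measurableSet_singleton f)).symm
    _ = ∑' f : {f : ι → ℕ | ∑ i, (f i : ℝ) < c}, ENNReal.ofReal (prodBinomialPMF z p f) := by
        simp_rw [← hfiber, hlaw]
    _ ≤ _ := tsum_prodBinomialPMF_sum_lt_le hp0 hp1 c hs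

/- `4 t / M` minimises `-s t + s ^ 2 M / 8`, which bounds the Chernoff exponent once
`θ ≤ p i` and `∑ z ≤ M` are used. -/
lemma chernoff_exponent_le {M t θ : ℝ} (hM : 0 < M) (ht : 0 ≤ t) {z : ι → ℕ} {p : ι → ℝ}
    (hθ : ∀ i, θ ≤ p i) (hz : ∑ i, (z i : ℝ) ≤ M) :
    4 * t / M * (θ * ∑ i, (z i : ℝ) - t) - ∑ i, z i * (p i * (4 * t / M) - (4 * t / M) ^ 2 / 8)
      ≤ -(2 * t ^ 2 / M) := by
  set s := 4 * t / M with hs_def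
  have hs : 0 ≤ s := by positivity
  have hθz : θ * ∑ i, (z i : ℝ) ≤ ∑ i, p i * z i := by
    rw [mul_sum]
    exact sum_le_sum fun i _ => mul_le_mul_of_nonneg_right (hθ i) (Nat.cast_nonneg _)
  have hexpand : ∑ i, z i * (p i * s - s ^ 2 / 8) =
      s * ∑ i, p i * z i - s ^ 2 / 8 * ∑ i, (z i : ℝ) := by
    rw [mul_sum, mul_sum, ← sum_sub_distrib]
    exact sum_congr rfl fun i _ => by ring
  have hst : s * t = 2 * (2 * t ^ 2 / M) := by rw [hs_def]; ring
  have hsM : s ^ 2 / 8 * M = 2 * t ^ 2 / M := by rw [hs_def]; field_simp; ring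
  rw [hexpand, mul_sub]
  linarith [mul_le_mul_of_nonneg_left hθz hs,
    mul_le_mul_of_nonneg_left hz (by positivity : 0 ≤ s ^ 2 / 8)]

lemma measure_sum_lt_sub_sqrt_le {Ω : Type*} [MeasurableSpace Ω] (ν : Measure Ω)
    {F : ι → Ω → ℕ} (hF : ∀ i, Measurable (F i)) {z : ι → ℕ} {p : ι → ℝ} {θ : ℝ}
    (hp0 : ∀ i, 0 ≤ p i) (hp1 : ∀ i, p i ≤ 1) (hθ : ∀ i, θ ≤ p i)
    (hlaw : ∀ f : ι → ℕ, ν {ω | ∀ i, F i ω = f i} = ENNReal.ofReal (prodBinomialPMF z p f))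
    {M : ℝ} (hM : 0 < M) (hz : ∑ i, (z i : ℝ) ≤ M) {δ : ℝ} (hδ0 : 0 < δ) (hδ1 : δ ≤ 1) :
    ν {ω | ∑ i, (F i ω : ℝ) < θ * ∑ i, (z i : ℝ) - √(M * log (1 / δ))} ≤
      ENNReal.ofReal (δ ^ 2) := by
  set t := √(M * log (1 / δ))
  have ht2 : t ^ 2 = M * log (1 / δ) :=
    sq_sqrt (mul_nonneg hM.le (log_nonneg (one_le_one_div hδ0 hδ1)))
  refine (measure_sum_lt_le_of_prodBinomialPMF ν hF hp0 hp1 hlaw _ (s := 4 * t / M)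
    (by positivity)).trans (ENNReal.ofReal_le_ofReal ?_)
  calc _ ≤ exp (-(2 * t ^ 2 / M)) :=
        exp_le_exp.2 (chernoff_exponent_le hM (sqrt_nonneg _) hθ hz)
    _ = δ ^ 2 := by
        rw [← exp_log (pow_pos hδ0 2), log_pow, ht2, one_div, log_inv]
        congr 1
        field_simp
        ring

end Binomial

theorem binomial_abandonment_bound_general
    {Ω : Type*} [MeasurableSpace Ω] (μ : Measure Ω) [IsProbabilityMeasure μ]
    (n : ℕ) (M : ℕ) (hM : 0 < M)
    (Z F : Fin n → Ω → ℕ)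
    (hZmeas : ∀ i, Measurable (Z i)) (hFmeas : ∀ i, Measurable (F i))
    (hsum : ∀ᵐ ω ∂μ, ∑ i, Z i ω ≤ M)
    (θ : ℝ) (θi : Fin n → ℝ) (hθ0 : 0 < θ)
    (hθi : ∀ i, θ ≤ θi i) (hθi1 : ∀ i, θi i ≤ 1)
    (hcond : ∀ z : Fin n → ℕ, μ {ω | ∀ i, Z i ω = z i} ≠ 0 →
      ∀ f : Fin n → ℕ,
        (μ[|{ω | ∀ i, Z i ω = z i}]) {ω | ∀ i, F i ω = f i} =
          ENNReal.ofReal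
            (∏ i, ((z i).choose (f i) : ℝ) * θi i ^ (f i) * (1 - θi i) ^ (z i - f i)))
    (δ : ℝ) (hδ0 : 0 < δ) (hδ1 : δ ≤ Real.exp (-1)) :
    ENNReal.ofReal (1 - δ ^ 2) ≤
      μ {ω | θ * ∑ i, (Z i ω : ℝ) - Real.sqrt ((M : ℝ) * Real.log (1 / δ)) ≤
        ∑ i, (F i ω : ℝ)} := by
  set t := √((M : ℝ) * log (1 / δ))
  let Zv : Ω → Fin n → ℕ := fun ω i => Z i ω
  have hZv : Measurable Zv := measurable_pi_lambda _ hZmeas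
  have hfiber (z : Fin n → ℕ) : {ω | ∀ i, Z i ω = z i} = Zv ⁻¹' {z} :=
    Set.ext fun ω => funext_iff.symm
  refine ofReal_one_sub_le_of_measure_compl_le (sq_nonneg δ) ?_
  simp only [Set.compl_ofPred, not_le]
  refine measure_le_of_forall_cond_preimage_le hZv fun z hz => ?_
  rw [← hfiber] at hz
  have hzM : ∑ i, (z i : ℝ) ≤ M := by
    obtain ⟨ω, hω, hωM⟩ :=
      Measure.exists_mem_of_measure_ne_zero_of_ae hz (ae_restrict_of_ae hsum)
    have hω' : ∀ i, Z i ω = z i := hω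
    simp only [← hω']
    exact_mod_cast hωM
  refine (cond_le_cond_of_inter_subset (hZv (measurableSet_singleton z))
    (B := {ω | ∑ i, (F i ω : ℝ) < θ * ∑ i, (z i : ℝ) - t}) fun _ ⟨rfl, h⟩ => h).trans ?_
  rw [← hfiber]
  exact measure_sum_lt_sub_sqrt_le _ hFmeas (fun i => hθ0.le.trans (hθi i)) hθi1 hθi
    (hcond z hz) (by exact_mod_cast hM) hzM hδ0 (hδ1.trans (exp_le_one_iff.2 (by norm_num)))

/-- Let `Z_1, …, Z_n` be nonnegative integer-valued random variables with
`Σ_i Z_i ≤ M` almost surely (`M` a positive integer), and suppose that, conditionally on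
`(Z_1, …, Z_n)`, the random variables `F_1, …, F_n` are independent with `F_i`
distributed `Binomial(Z_i, θ_i)` (encoded by: conditionally on any value `z` of `Z`
with positive probability, the joint conditional law of `(F_1, …, F_n)` is the product
of the binomial pmfs), where each `θ_i ≥ θ` for a fixed `θ ∈ (0,1]`. Then for every
`δ ∈ (0, e^{−1}]`,
`Pr{ Σ_i F_i ≥ θ·Σ_i Z_i − √(M·ln(1/δ)) } ≥ 1 − δ²`. -/
theorem binomial_abandonment_bound
    {Ω : Type*} [MeasurableSpace Ω] (μ : Measure Ω) [IsProbabilityMeasure μ]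
    (n : ℕ) (M : ℕ) (hM : 0 < M)
    (Z F : Fin n → Ω → ℕ)
    (hZmeas : ∀ i, Measurable (Z i)) (hFmeas : ∀ i, Measurable (F i))
    (hsum : ∀ᵐ ω ∂μ, ∑ i, Z i ω ≤ M)
    (θ : ℝ) (θi : Fin n → ℝ) (hθ0 : 0 < θ) (hθ1 : θ ≤ 1)
    (hθi : ∀ i, θ ≤ θi i) (hθi1 : ∀ i, θi i ≤ 1)
    (hcond : ∀ z : Fin n → ℕ, μ {ω | ∀ i, Z i ω = z i} ≠ 0 →
      ∀ f : Fin n → ℕ,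
        (μ[|{ω | ∀ i, Z i ω = z i}]) {ω | ∀ i, F i ω = f i} =
          ENNReal.ofReal
            (∏ i, ((z i).choose (f i) : ℝ) * θi i ^ (f i) * (1 - θi i) ^ (z i - f i)))
    (δ : ℝ) (hδ0 : 0 < δ) (hδ1 : δ ≤ Real.exp (-1)) :
    ENNReal.ofReal (1 - δ ^ 2) ≤
      μ {ω | θ * ∑ i, (Z i ω : ℝ) - Real.sqrt ((M : ℝ) * Real.log (1 / δ)) ≤
        ∑ i, (F i ω : ℝ)} :=
  binomial_abandonment_bound_general μ n M hM Z F hZmeas hFmeas hsum θ θi hθ0 hθi hθi1 hcond δ hδ0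
    hδ1
end
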